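/- arXiv:2405.10277 — 6 statements merged into one kernel-verified Lean document; each statement's English description precedes it below -/
import Mathlib

section
/- Let r_1,...,r_n ≥ 1, let A_i ⊆ F be sets of size r_i with elements a_{i,1},...,a_{i,r_i}, let M be the set of monomials dividing X_1^{r_1-1}···X_n^{r_n-1}, and let σ_A map the monomial ∏ X_i^{e_i} to the point (a_{1,e_1+1},...,a_{n,e_n+1}) ∈ ∏ A_i. Then for every down-closed set T ⊆ M of monomials, the set of standard monomials of the vanishing ideal of σ_A(T) equals T (with respect to any degree-compatible monomial order). -/
/-!
The Newton polynomials `Q_f = ∏ᵢ ∏_{j < fᵢ} (Xᵢ - a i j)` have coefficient `1` at `X^f` and all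
their other monomials properly divide `X^f`; hence they span the polynomial ring, and
`Q_f` vanishes at `σ_A(g)` (for `g ∈ M`) exactly when `f` does not divide `g`.

If `e ∉ T`, then `Q_e` vanishes on `σ_A(T)` because `T` is down-closed, and its leading monomial is
`X^e` because the order is degree-compatible, so `X^e` is not standard. Conversely, expand a
polynomial `p` vanishing on `σ_A(T)` as `∑ c_f Q_f`. Evaluating at `σ_A(g)`, `g ∈ T`, gives
`c_g = 0` by induction along divisibility, whereas the leading monomial of `p` is some `X^f` with
`c_f ≠ 0`. So it does not lie in `T`.
-/

/-- The vanishing ideal of `S`, as the set of polynomials vanishing on `S`. -/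
def vanishSet (F : Type) [Field F] {n : ℕ} (S : Set (Fin n → F)) :
    Set (MvPolynomial (Fin n) F) :=
  {p | ∀ x ∈ S, MvPolynomial.eval x p = 0}

/-- `m` is the leading monomial of `p` with respect to the monomial order `ord`. -/
def IsLeadMon {F : Type} [Field F] {n : ℕ}
    (ord : (Fin n →₀ ℕ) → (Fin n →₀ ℕ) → Prop)
    (p : MvPolynomial (Fin n) F) (m : Fin n →₀ ℕ) : Prop :=
  m ∈ p.support ∧ ∀ m' ∈ p.support, ord m' m

/-- `m` is a standard monomial of the set of polynomials `I`. -/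
def IsStdMon {F : Type} [Field F] {n : ℕ}
    (ord : (Fin n →₀ ℕ) → (Fin n →₀ ℕ) → Prop)
    (I : Set (MvPolynomial (Fin n) F)) (m : Fin n →₀ ℕ) : Prop :=
  ∀ p ∈ I, p ≠ 0 → ¬ IsLeadMon ord p m

open MvPolynomial Finset

namespace MvPolynomial

variable {σ R : Type*} [CommRing R]

def HasTopMonomial (p : MvPolynomial σ R) (m : σ →₀ ℕ) : Prop :=
  (∀ m' ∈ p.support, m' ≤ m) ∧ p.coeff m = 1

namespace HasTopMonomial

variable {p q : MvPolynomial σ R} {m m' : σ →₀ ℕ}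

theorem le_of_coeff_ne_zero (hp : HasTopMonomial p m) (h : p.coeff m' ≠ 0) : m' ≤ m :=
  hp.1 m' (mem_support_iff.2 h)

theorem one : HasTopMonomial (1 : MvPolynomial σ R) 0 := by
  classical
  refine ⟨fun m' hm' => ?_, coeff_zero_one⟩
  rw [mem_support_iff, coeff_one] at hm'
  exact (ite_ne_right_iff.1 hm').1 ▸ le_rfl

theorem mul (hp : HasTopMonomial p m) (hq : HasTopMonomial q m') :
    HasTopMonomial (p * q) (m + m') := by
  classical
  refine ⟨fun k hk => ?_, ?_⟩
  · obtain ⟨k₁, hk₁, k₂, hk₂, rfl⟩ := Finset.mem_add.1 (support_mul p q hk)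
    exact add_le_add (hp.1 k₁ hk₁) (hq.1 k₂ hk₂)
  · have hunique : UniqueAdd p.support q.support m m' := fun k₁ k₂ hk₁ hk₂ hk =>
      (add_eq_add_iff_eq_and_eq (hp.1 k₁ hk₁) (hq.1 k₂ hk₂)).1 hk
    rw [coeff, AddMonoidAlgebra.coeff_mul_add_of_uniqueAdd hunique]
    exact (congrArg₂ (· * ·) hp.2 hq.2).trans (one_mul 1)

theorem prod {ι : Type*} (s : Finset ι) {p : ι → MvPolynomial σ R} {m : ι → σ →₀ ℕ}
    (h : ∀ j ∈ s, HasTopMonomial (p j) (m j)) :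
    HasTopMonomial (∏ j ∈ s, p j) (∑ j ∈ s, m j) := by
  classical
  induction s using Finset.induction_on with
  | empty => simpa using one
  | insert j s hj ih =>
    rw [prod_insert hj, sum_insert hj]
    exact (h j (mem_insert_self j s)).mul (ih fun k hk => h k (mem_insert_of_mem hk))

theorem ne_zero [Nontrivial R] (hp : HasTopMonomial p m) : p ≠ 0 := by
  rintro rfl
  simpa using hp.2

end HasTopMonomial

theorem hasTopMonomial_X_sub_C [Nontrivial R] (i : σ) (c : R) :
    HasTopMonomial (X i - C c) (Finsupp.single i 1) := by
  classical
  refine ⟨fun m hm => ?_, ?_⟩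
  · rw [mem_support_iff, coeff_sub, coeff_X, coeff_C] at hm
    by_cases h : Finsupp.single i 1 = m
    · exact h ▸ le_rfl
    · have : 0 = m := by by_contra h'; simp [h, h'] at hm
      exact this ▸ zero_le
  · simp [coeff_X, coeff_C, (Finsupp.single_ne_zero.2 one_ne_zero).symm]

theorem span_range_eq_top_of_hasTopMonomial {b : (σ →₀ ℕ) → MvPolynomial σ R}
    (hb : ∀ m, HasTopMonomial (b m) m) : Submodule.span R (Set.range b) = ⊤ := by
  classical
  set V := Submodule.span R (Set.range b)
  have hmonomial : ∀ m, monomial m (1 : R) ∈ V := by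
    intro m
    induction m using WellFoundedLT.induction with
    | _ m ih =>
    have hlower : b m - monomial m 1 ∈ V := by
      rw [as_sum (b m - monomial m 1)]
      refine Submodule.sum_mem _ fun k hk => ?_
      have hlt : k < m := by
        rw [mem_support_iff, coeff_sub, coeff_monomial] at hk
        by_cases hkm : m = k
        · subst hkm; simp [(hb m).2] at hk
        · rw [if_neg hkm, sub_zero] at hk
          exact lt_of_le_of_ne ((hb m).le_of_coeff_ne_zero hk) (Ne.symm hkm)
      simpa only [smul_monomial, smul_eq_mul, mul_one] using
        Submodule.smul_mem V (coeff k (b m - monomial m 1)) (ih k hlt)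
    simpa using Submodule.sub_mem V (Submodule.subset_span ⟨m, rfl⟩) hlower
  rw [eq_top_iff]
  intro p _
  rw [p.as_sum]
  exact Submodule.sum_mem _ fun k _ => by
    simpa only [smul_monomial, smul_eq_mul, mul_one] using
      Submodule.smul_mem V (coeff k p) (hmonomial k)

section Newton

variable [Fintype σ] (a : σ → ℕ → R)

noncomputable def newtonPoly (f : σ →₀ ℕ) : MvPolynomial σ R :=
  ∏ i, ∏ j ∈ range (f i), (X i - C (a i j))

theorem hasTopMonomial_newtonPoly [Nontrivial R] (f : σ →₀ ℕ) :
    HasTopMonomial (newtonPoly a f) f := by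
  have h := HasTopMonomial.prod univ fun i _ =>
    HasTopMonomial.prod (range (f i)) fun j _ => hasTopMonomial_X_sub_C i (a i j)
  simpa only [newtonPoly, sum_const, card_range, Finsupp.smul_single, smul_eq_mul, mul_one,
    Finsupp.univ_sum_single] using h

theorem eval_newtonPoly (f : σ →₀ ℕ) (x : σ → R) :
    eval x (newtonPoly a f) = ∏ i, ∏ j ∈ range (f i), (x i - a i j) := by
  simp [newtonPoly]

theorem eval_newtonPoly_eq_zero {f g : σ →₀ ℕ} (h : ¬ f ≤ g) :
    eval (fun i => a i (g i)) (newtonPoly a f) = 0 := by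
  obtain ⟨i, hi⟩ : ∃ i, g i < f i := by simpa [Finsupp.le_def] using h
  rw [eval_newtonPoly]
  exact prod_eq_zero (mem_univ i) (prod_eq_zero (mem_range.2 hi) (sub_self _))

theorem eval_newtonPoly_ne_zero [IsDomain R] {r : σ → ℕ}
    (hinj : ∀ i, Set.InjOn (a i) {j | j < r i}) {f g : σ →₀ ℕ} (hg : ∀ i, g i < r i) (h : f ≤ g) :
    eval (fun i => a i (g i)) (newtonPoly a f) ≠ 0 := by
  rw [eval_newtonPoly]
  refine prod_ne_zero_iff.2 fun i _ => prod_ne_zero_iff.2 fun j hj => sub_ne_zero.2 fun hij => ?_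
  have hjg : j < g i := (mem_range.1 hj).trans_le (h i)
  exact hjg.ne (hinj i (hjg.trans (hg i)) (hg i) hij.symm)

theorem linearCombination_newtonPoly_surjective [Nontrivial R] :
    Function.Surjective (Finsupp.linearCombination R (newtonPoly a)) := by
  rw [← LinearMap.range_eq_top, Finsupp.range_linearCombination]
  exact span_range_eq_top_of_hasTopMonomial (hasTopMonomial_newtonPoly a)

end Newton

section LinearCombination

variable {b : (σ →₀ ℕ) → MvPolynomial σ R} (c : (σ →₀ ℕ) →₀ R)

theorem coeff_linearCombination (m : σ →₀ ℕ) :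
    coeff m (Finsupp.linearCombination R b c) = ∑ f ∈ c.support, c f * coeff m (b f) := by
  simp [Finsupp.linearCombination_apply, Finsupp.sum, coeff_sum]

theorem eval_linearCombination (x : σ → R) :
    eval x (Finsupp.linearCombination R b c) = ∑ f ∈ c.support, c f * eval x (b f) := by
  simp [Finsupp.linearCombination_apply, Finsupp.sum]

theorem exists_le_of_mem_support_linearCombination (hb : ∀ m, HasTopMonomial (b m) m)
    {m : σ →₀ ℕ} (hm : m ∈ (Finsupp.linearCombination R b c).support) : ∃ f ∈ c.support, m ≤ f := by
  rw [mem_support_iff, coeff_linearCombination] at hm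
  obtain ⟨f, hf, hcf⟩ := exists_ne_zero_of_sum_ne_zero hm
  exact ⟨f, hf, (hb f).le_of_coeff_ne_zero (right_ne_zero_of_mul hcf)⟩

theorem coeff_linearCombination_of_forall_not_lt (hb : ∀ m, HasTopMonomial (b m) m)
    {f₀ : σ →₀ ℕ} (h : ∀ f ∈ c.support, ¬ f₀ < f) :
    coeff f₀ (Finsupp.linearCombination R b c) = c f₀ := by
  rw [coeff_linearCombination, sum_eq_single f₀, (hb f₀).2, mul_one]
  · intro f hf hne
    by_contra hcf
    exact h f hf <|
      lt_of_le_of_ne ((hb f).le_of_coeff_ne_zero (right_ne_zero_of_mul hcf)) hne.symm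
  · intro hf₀
    rw [Finsupp.notMem_support_iff.1 hf₀, zero_mul]

end LinearCombination

theorem eq_zero_of_eval_linearCombination_newtonPoly_eq_zero [Fintype σ] [IsDomain R]
    {a : σ → ℕ → R} {r : σ → ℕ} (hinj : ∀ i, Set.InjOn (a i) {j | j < r i})
    {T : Set (σ →₀ ℕ)} (hTr : ∀ g ∈ T, ∀ i, g i < r i) (hT : IsLowerSet T)
    (c : (σ →₀ ℕ) →₀ R)
    (hc : ∀ g ∈ T, eval (fun i => a i (g i)) (Finsupp.linearCombination R (newtonPoly a) c) = 0) :
    ∀ g ∈ T, c g = 0 := by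
  intro g
  induction g using WellFoundedLT.induction with
  | _ g ih =>
  intro hg
  have hterm : ∀ f ∈ c.support, f ≠ g →
      c f * eval (fun i => a i (g i)) (newtonPoly a f) = 0 := by
    intro f _ hne
    by_cases hfg : f ≤ g
    · rw [ih f (lt_of_le_of_ne hfg hne) (hT hfg hg), zero_mul]
    · rw [eval_newtonPoly_eq_zero a hfg, mul_zero]
  have hcg := hc g hg
  rw [eval_linearCombination, sum_eq_single g hterm
    fun hg' => by rw [Finsupp.notMem_support_iff.1 hg', zero_mul]] at hcg
  exact (mul_eq_zero.1 hcg).resolve_right (eval_newtonPoly_ne_zero a hinj (hTr g hg) le_rfl)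

end MvPolynomial

section LeadingMonomial

theorem rel_of_le {α : Type*} [PartialOrder α] {r : α → α → Prop} [Std.Refl r]
    (hlt : ∀ x y : α, x < y → r x y) {x y : α} (h : x ≤ y) : r x y :=
  h.eq_or_lt.elim (fun h => h ▸ refl_of r x) (hlt x y)

variable {F : Type} [Field F] {n : ℕ} {ord : (Fin n →₀ ℕ) → (Fin n →₀ ℕ) → Prop}

theorem MvPolynomial.HasTopMonomial.isLeadMon [Std.Refl ord]
    (hmono : ∀ e e' : Fin n →₀ ℕ, e < e' → ord e e') {p : MvPolynomial (Fin n) F}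
    {m : Fin n →₀ ℕ} (hp : HasTopMonomial p m) : IsLeadMon ord p m :=
  ⟨mem_support_iff.2 (hp.2 ▸ one_ne_zero), fun _ hm' => rel_of_le hmono (hp.1 _ hm')⟩

theorem mem_support_of_isLeadMon_linearCombination [IsPartialOrder (Fin n →₀ ℕ) ord]
    (hmono : ∀ e e' : Fin n →₀ ℕ, e < e' → ord e e')
    {b : (Fin n →₀ ℕ) → MvPolynomial (Fin n) F} (hb : ∀ m, HasTopMonomial (b m) m)
    (c : (Fin n →₀ ℕ) →₀ F) {e : Fin n →₀ ℕ}
    (he : IsLeadMon ord (Finsupp.linearCombination F b c) e) : e ∈ c.support := by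
  classical
  obtain ⟨f₁, hf₁, hef₁⟩ := exists_le_of_mem_support_linearCombination c hb he.1
  obtain ⟨f₀, hf₀⟩ := exists_maximal (s := c.support.filter (ord e ·))
    ⟨f₁, mem_filter.2 ⟨hf₁, rel_of_le hmono hef₁⟩⟩
  obtain ⟨hf₀c, hef₀⟩ := mem_filter.1 hf₀.prop
  have hcoeff : coeff f₀ (Finsupp.linearCombination F b c) = c f₀ :=
    coeff_linearCombination_of_forall_not_lt c hb fun f hf hlt => hlt.not_ge <|
      hf₀.le_of_ge (mem_filter.2 ⟨hf, trans_of ord hef₀ (hmono _ _ hlt)⟩) hlt.le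
  have hf₀e : ord f₀ e :=
    he.2 f₀ (mem_support_iff.2 (hcoeff ▸ Finsupp.mem_support_iff.1 hf₀c))
  exact antisymm_of ord hef₀ hf₀e ▸ hf₀c

end LeadingMonomial

/-- Indices are shifted by one: `a i j` is the paper's `a_{i,j+1}`, so `σ_A` sends `e` to
`fun i => a i (e i)`, and `M` is the set of exponent vectors `e` with `e i < rr i`. -/
theorem stmt3_general (F : Type) [Field F] (n : ℕ) (rr : Fin n → ℕ)
    (a : Fin n → ℕ → F) (hinj : ∀ i, Set.InjOn (a i) {j | j < rr i})
    (ord : (Fin n →₀ ℕ) → (Fin n →₀ ℕ) → Prop)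
    (hlin : IsLinearOrder (Fin n →₀ ℕ) ord)
    (hdeg : ∀ a b : Fin n →₀ ℕ, (∑ i, a i) < (∑ i, b i) → ord a b)
    (T : Set (Fin n →₀ ℕ))
    (hTM : ∀ e ∈ T, ∀ i, e i < rr i)
    (hdown : ∀ e e' : Fin n →₀ ℕ, e' ≤ e → e ∈ T → e' ∈ T) :
    {m : Fin n →₀ ℕ |
        IsStdMon ord (vanishSet F ((fun (e : Fin n →₀ ℕ) (i : Fin n) => a i (e i)) '' T)) m}
      = T := by
  have hmono : ∀ e e' : Fin n →₀ ℕ, e < e' → ord e e' :=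
    fun e e' h => hdeg e e' (Fintype.sum_strictMono h)
  have htop := hasTopMonomial_newtonPoly a
  ext e
  refine ⟨fun hstd => ?_, fun he p hp _ hlead => ?_⟩
  · by_contra he
    refine hstd (newtonPoly a e) ?_ (htop e).ne_zero ((htop e).isLeadMon hmono)
    rintro _ ⟨g, hg, rfl⟩
    exact eval_newtonPoly_eq_zero a fun heg => he (hdown g e heg hg)
  · obtain ⟨c, rfl⟩ := linearCombination_newtonPoly_surjective a p
    have hce := mem_support_of_isLeadMon_linearCombination hmono htop c hlead
    refine Finsupp.mem_support_iff.1 hce ?_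
    refine eq_zero_of_eval_linearCombination_newtonPoly_eq_zero hinj hTM hdown c ?_ e he
    exact fun g hg => hp _ ⟨g, hg, rfl⟩

/-- Here `a i j` is the `(j+1)`-st element `a_{i,j+1}` of the set `A_i ⊆ F` of size `rr i`
(so `A_i = a i '' {j | j < rr i}`, with the `a i` injective on `{j | j < rr i}`).
`M` is represented by the exponent vectors `e` with `e i < rr i` for all `i`, and
`σ_A` sends `e` to the point `(a 1 (e 1), …, a n (e n))`.  For every down-closed set
`T ⊆ M` of monomials, the set of standard monomials of the vanishing ideal of `σ_A(T)`
equals `T`, with respect to any degree-compatible monomial order. -/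
theorem stmt3 (F : Type) [Field F] (n : ℕ) (rr : Fin n → ℕ) (hr : ∀ i, 1 ≤ rr i)
    (a : Fin n → ℕ → F) (hinj : ∀ i, Set.InjOn (a i) {j | j < rr i})
    (ord : (Fin n →₀ ℕ) → (Fin n →₀ ℕ) → Prop)
    (hlin : IsLinearOrder (Fin n →₀ ℕ) ord)
    (hmin : ∀ m : Fin n →₀ ℕ, ord 0 m)
    (hadd : ∀ a b c : Fin n →₀ ℕ, ord a b → ord (a + c) (b + c))
    (hdeg : ∀ a b : Fin n →₀ ℕ, (∑ i, a i) < (∑ i, b i) → ord a b)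
    (T : Set (Fin n →₀ ℕ))
    (hTM : ∀ e ∈ T, ∀ i, e i < rr i)
    (hdown : ∀ e e' : Fin n →₀ ℕ, e' ≤ e → e ∈ T → e' ∈ T) :
    {m : Fin n →₀ ℕ |
        IsStdMon ord (vanishSet F ((fun (e : Fin n →₀ ℕ) (i : Fin n) => a i (e i)) '' T)) m}
      = T :=
  stmt3_general F n rr a hinj ord hlin hdeg T hTM hdown
end

section
/- Let n, k, d ∈ ℕ with k ≤ 2^n, and let S ⊆ {0,1}^n be a contiguous set of size k (i.e., S consists of all strings lexicographically between its minimum and maximum). Then the number of strings of Hamming weight ≤ d in the set M(k) of the k lexicographically smallest strings of {0,1}^n is at least the number of strings of Hamming weight ≤ d in S. -/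
/-- The value of a binary string of length `n`, first coordinate most significant.
Comparing values is exactly the lexicographic order on `{0,1}^n`. -/
def valB {n : ℕ} (x : Fin n → Fin 2) : ℕ := ∑ i, (x i : ℕ) * 2 ^ (n - 1 - (i : ℕ))

def w (t : ℕ) : ℕ := (Nat.digits 2 t).sum

lemma w_zero : w 0 = 0 := by simp [w]

lemma w_rec {t : ℕ} (h : t ≠ 0) : w t = t % 2 + w (t / 2) := by
  unfold w
  rw [Nat.digits_def' (by norm_num) (Nat.pos_of_ne_zero h)]
  simp

lemma w_two_mul_add {a r : ℕ} (hr : r < 2) (h : 2 * a + r ≠ 0) :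
    w (2 * a + r) = r + w a := by
  rw [w_rec h]
  congr 1
  · omega
  · congr 1; omega

lemma w_le {n t : ℕ} (h : t < 2 ^ n) : w t ≤ n := by
  induction n generalizing t with
  | zero => interval_cases t; simp [w_zero]
  | succ n ih =>
    rcases Nat.eq_zero_or_pos t with h0 | h0
    · simp [h0, w_zero]
    · rw [w_rec h0.ne']
      have := ih (t := t / 2) (by omega)
      omega

lemma w_pow_add {n s : ℕ} (h : s < 2 ^ n) : w (2 ^ n + s) = 1 + w s := by
  induction n generalizing s with
  | zero => interval_cases s; simp [w, Nat.digits_def' (b:=2)]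
  | succ n ih =>
    have h1 : 2 ^ (n+1) + s = 2 * (2 ^ n + s / 2) + s % 2 := by
      have := Nat.div_add_mod s 2; ring_nf; omega
    rw [h1, w_two_mul_add (Nat.mod_lt _ (by norm_num)) (by positivity)]
    rw [ih (by omega)]
    rcases Nat.eq_zero_or_pos s with h0 | h0
    · simp [h0, w_zero]
    · rw [w_rec h0.ne']; omega

lemma w_compl {n t : ℕ} (h : t < 2 ^ n) : w (2 ^ n - 1 - t) + w t = n := by
  induction n generalizing t with
  | zero => interval_cases t; simp [w]
  | succ n ih =>
    have hc : 2 ^ (n+1) - 1 - t = 2 * (2 ^ n - 1 - t / 2) + (1 - t % 2) := by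
      have := Nat.div_add_mod t 2
      have : t / 2 < 2 ^ n := by omega
      ring_nf
      omega
    have ht2 : t / 2 < 2 ^ n := by omega
    have hiH := ih ht2
    rcases Nat.eq_zero_or_pos t with h0 | h0
    · subst h0
      simp only [Nat.zero_div, Nat.sub_zero, Nat.zero_mod] at hc ⊢
      rw [hc, w_two_mul_add (by omega) (by positivity), w_zero]
      simp only [Nat.zero_div, Nat.sub_zero, Nat.zero_mod] at hiH
      rw [w_zero] at hiH
      omega
    rcases Nat.eq_or_lt_of_le (Nat.succ_le_of_lt h) with he | hlt
    · -- t = 2^(n+1) - 1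
      have ht : t = 2 ^ (n+1) - 1 := by omega
      subst ht
      have : 2 ^ (n + 1) - 1 - (2 ^ (n + 1) - 1) = 0 := by omega
      rw [this, w_zero, w_rec (by positivity)]
      have e1 : (2 ^ (n+1) - 1) % 2 = 1 := by omega
      have e2 : (2 ^ (n+1) - 1) / 2 = 2 ^ n - 1 := by omega
      rw [e1, e2]
      have := ih (t := 0) (by positivity)
      simp only [Nat.sub_zero, w_zero] at this
      omega
    · -- generic
      have hcne : 2 ^ (n+1) - 1 - t ≠ 0 := by omega
      rw [hc, w_two_mul_add (by omega) (by omega), w_rec h0.ne']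
      omega

noncomputable def cnt (a b d : ℕ) : ℕ := ((Finset.Ico a b).filter (fun t => w t ≤ d)).card

lemma cnt_split {a b c : ℕ} (hab : a ≤ b) (hbc : b ≤ c) (d : ℕ) :
    cnt a c d = cnt a b d + cnt b c d := by
  unfold cnt
  rw [← Finset.Ico_union_Ico_eq_Ico hab hbc, Finset.filter_union,
    Finset.card_union_of_disjoint]
  exact Finset.disjoint_filter_filter (Finset.Ico_disjoint_Ico_consecutive a b c)

lemma cnt_mono_d {a b d d' : ℕ} (h : d ≤ d') : cnt a b d ≤ cnt a b d' := by
  apply Finset.card_le_card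
  intro t ht
  simp only [Finset.mem_filter] at ht ⊢
  exact ⟨ht.1, ht.2.trans h⟩

lemma cnt_mono_b {a b b' d : ℕ} (h : b ≤ b') : cnt a b d ≤ cnt a b' d :=
  Finset.card_le_card (Finset.filter_subset_filter _ (Finset.Ico_subset_Ico le_rfl h))

lemma cnt_le_len {a b d : ℕ} : cnt a b d ≤ b - a :=
  le_trans (Finset.card_filter_le _ _) (by rw [Nat.card_Ico])

lemma cnt_all {n a b d : ℕ} (hb : b ≤ 2 ^ n) (hd : n ≤ d) : cnt a b d = b - a := by
  unfold cnt
  rw [Finset.filter_true_of_mem, Nat.card_Ico]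
  intro t ht
  exact le_trans (w_le (lt_of_lt_of_le (Finset.mem_Ico.1 ht).2 hb)) hd

lemma cnt_shift {n p q d : ℕ} (hq : q ≤ 2 ^ n) :
    cnt (2 ^ n + p) (2 ^ n + q) (d + 1) = cnt p q d := by
  unfold cnt
  refine Finset.card_bij' (fun t _ => t - 2 ^ n) (fun t _ => 2 ^ n + t) ?_ ?_ ?_ ?_
  · intro t ht
    simp only [Finset.mem_filter, Finset.mem_Ico] at ht ⊢
    have h2 : 2 ^ n + (t - 2 ^ n) = t := by omega
    have hw : w t = 1 + w (t - 2 ^ n) := by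
      nth_rewrite 1 [← h2]
      rw [w_pow_add (by omega)]
    omega
  · intro t ht
    simp only [Finset.mem_filter, Finset.mem_Ico] at ht ⊢
    rw [w_pow_add (lt_of_lt_of_le ht.1.2 hq)]
    omega
  · intro t ht; simp only [Finset.mem_filter, Finset.mem_Ico] at ht
    show 2 ^ n + (t - 2 ^ n) = t; omega
  · intro t ht; show 2 ^ n + t - 2 ^ n = t; omega

lemma cnt_top_zero {n p q : ℕ} (hp : 2 ^ n ≤ p) (hq : q ≤ 2 ^ (n + 1)) :
    cnt p q 0 = 0 := by
  unfold cnt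
  rw [Finset.card_eq_zero, Finset.filter_eq_empty_iff]
  intro t ht
  simp only [Finset.mem_Ico] at ht
  have h2 : 2 ^ n + (t - 2 ^ n) = t := by omega
  have : w t = 1 + w (t - 2 ^ n) := by
    nth_rewrite 1 [← h2]
    rw [w_pow_add (by omega)]
  omega

lemma cnt_compl {n p q d : ℕ} (hpq : p ≤ q) (hq : q ≤ 2 ^ n) (hd : d < n) :
    cnt p q d = (q - p) - cnt (2 ^ n - q) (2 ^ n - p) (n - d - 1) := by
  have key : cnt p q d + cnt (2 ^ n - q) (2 ^ n - p) (n - d - 1) = q - p := by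
    have hsplit := Finset.card_filter_add_card_filter_not
      (s := Finset.Ico p q) (p := fun t => w t ≤ d)
    have hbij : ((Finset.Ico p q).filter (fun t => ¬ w t ≤ d)).card
        = cnt (2 ^ n - q) (2 ^ n - p) (n - d - 1) := by
      unfold cnt
      refine Finset.card_bij' (fun t _ => 2 ^ n - 1 - t) (fun t _ => 2 ^ n - 1 - t) ?_ ?_ ?_ ?_
      · intro t ht
        simp only [Finset.mem_filter, Finset.mem_Ico, not_le] at ht ⊢
        have hc := w_compl (n := n) (t := t) (by omega)
        omega
      · intro t ht
        simp only [Finset.mem_filter, Finset.mem_Ico, not_le] at ht ⊢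
        have hc := w_compl (n := n) (t := 2 ^ n - 1 - t) (by omega)
        have he : 2 ^ n - 1 - (2 ^ n - 1 - t) = t := by omega
        rw [he] at hc
        omega
      · intro t ht; simp only [Finset.mem_filter, Finset.mem_Ico] at ht
        show 2 ^ n - 1 - (2 ^ n - 1 - t) = t; omega
      · intro t ht; simp only [Finset.mem_filter, Finset.mem_Ico] at ht
        show 2 ^ n - 1 - (2 ^ n - 1 - t) = t; omega
    unfold cnt
    rw [← Nat.card_Ico p q, ← hsplit, hbij]
    rfl
  have := cnt_le_len (a := 2 ^ n - q) (b := 2 ^ n - p) (d := n - d - 1)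
  omega

lemma cnt_final_min {n : ℕ}
    (hMain : ∀ a k d, a + k ≤ 2 ^ n → cnt a (a + k) d ≤ cnt 0 k d)
    {c L d : ℕ} (h : c + L ≤ 2 ^ n) :
    cnt (2 ^ n - L) (2 ^ n) d ≤ cnt c (c + L) d := by
  rcases le_or_gt n d with hd | hd
  · rw [cnt_all (n := n) le_rfl hd, cnt_all (n := n) h hd]
    omega
  · rw [cnt_compl (n := n) (by omega) le_rfl hd,
      cnt_compl (n := n) (by omega) h hd]
    rw [show 2 ^ n - 2 ^ n = 0 from by omega,
      show 2 ^ n - (2 ^ n - L) = L from by omega]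
    have h1 : cnt (2 ^ n - (c + L)) (2 ^ n - c) (n - d - 1) ≤ cnt 0 L (n - d - 1) := by
      have := hMain (2 ^ n - (c + L)) L (n - d - 1) (by omega)
      rwa [show 2 ^ n - (c + L) + L = 2 ^ n - c from by omega] at this
    have h2 := cnt_le_len (a := 2 ^ n - (c + L)) (b := 2 ^ n - c) (d := n - d - 1)
    have h3 := cnt_le_len (a := (0:ℕ)) (b := L) (d := n - d - 1)
    omega

theorem main (n : ℕ) : ∀ a k d, a + k ≤ 2 ^ n → cnt a (a + k) d ≤ cnt 0 k d := by
  induction n with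
  | zero =>
    intro a k d h
    rcases Nat.eq_zero_or_pos k with hk | hk
    · subst hk
      simp [cnt]
    · have : a = 0 := by omega
      subst this
      rw [Nat.zero_add]
  | succ n ih =>
    intro a k d h
    by_cases hA : a + k ≤ 2 ^ n
    · exact ih a k d hA
    push_neg at hA
    by_cases hB : 2 ^ n ≤ a
    · -- top half
      cases d with
      | zero =>
        rw [cnt_top_zero hB h]
        exact Nat.zero_le _
      | succ d =>
        have hshift : cnt a (a + k) (d + 1) = cnt (a - 2 ^ n) (a - 2 ^ n + k) d := by
          have := cnt_shift (n := n) (p := a - 2 ^ n) (q := a - 2 ^ n + k) (d := d) (by omega)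
          rwa [show 2 ^ n + (a - 2 ^ n) = a from by omega,
            show 2 ^ n + (a - 2 ^ n + k) = a + k from by omega] at this
        rw [hshift]
        exact (ih _ k d (by omega)).trans (cnt_mono_d (by omega))
    · -- straddle: a < 2^n < a + k
      push_neg at hB
      have hsplit : cnt a (a + k) d = cnt a (2 ^ n) d + cnt (2 ^ n) (a + k) d :=
        cnt_split (by omega) (by omega) d
      cases d with
      | zero =>
        have htop : cnt (2 ^ n) (a + k) 0 = 0 := cnt_top_zero le_rfl h
        rw [hsplit, htop]
        have c1 : cnt a (2 ^ n) 0 = cnt a (a + (2 ^ n - a)) 0 := by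
          rw [show a + (2 ^ n - a) = 2 ^ n from by omega]
        rw [c1]
        calc cnt a (a + (2 ^ n - a)) 0 + 0 ≤ cnt 0 (2 ^ n - a) 0 := by
              have := ih a (2 ^ n - a) 0 (by omega); omega
        _ ≤ cnt 0 k 0 := cnt_mono_b (by omega)
      | succ d =>
        have h2 : cnt (2 ^ n) (a + k) (d + 1) = cnt 0 (a + k - 2 ^ n) d := by
          have := cnt_shift (n := n) (p := 0) (q := a + k - 2 ^ n) (d := d) (by omega)
          rwa [Nat.add_zero, show 2 ^ n + (a + k - 2 ^ n) = a + k from by omega] at this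
        rw [hsplit, h2]
        by_cases hk : k ≤ 2 ^ n
        · -- C1
          have e1 : cnt 0 k (d + 1)
              = cnt 0 (a + k - 2 ^ n) (d + 1) + cnt (a + k - 2 ^ n) k (d + 1) :=
            cnt_split (by omega) (by omega) _
          have e2 : cnt a (2 ^ n) (d + 1) ≤ cnt (a + k - 2 ^ n) k (d + 1) := by
            have := cnt_final_min (n := n) ih
              (c := a + k - 2 ^ n) (L := 2 ^ n - a) (d := d + 1) (by omega)
            rwa [show 2 ^ n - (2 ^ n - a) = a from by omega,
              show a + k - 2 ^ n + (2 ^ n - a) = k from by omega] at this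
          have e3 : cnt 0 (a + k - 2 ^ n) d ≤ cnt 0 (a + k - 2 ^ n) (d + 1) :=
            cnt_mono_d (by omega)
          omega
        · -- C2
          push_neg at hk
          have e1 : cnt 0 k (d + 1)
              = cnt 0 (2 ^ n) (d + 1) + cnt (2 ^ n) k (d + 1) :=
            cnt_split (by omega) (by omega) _
          have e2 : cnt (2 ^ n) k (d + 1) = cnt 0 (k - 2 ^ n) d := by
            have := cnt_shift (n := n) (p := 0) (q := k - 2 ^ n) (d := d) (by omega)
            rwa [Nat.add_zero, show 2 ^ n + (k - 2 ^ n) = k from by omega] at this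
          have e3 : cnt 0 (2 ^ n) (d + 1)
              = cnt 0 a (d + 1) + cnt a (2 ^ n) (d + 1) :=
            cnt_split (by omega) (by omega) _
          have e4 : cnt 0 (a + k - 2 ^ n) d
              = cnt 0 (k - 2 ^ n) d + cnt (k - 2 ^ n) (a + k - 2 ^ n) d :=
            cnt_split (by omega) (by omega) _
          have e5 : cnt (k - 2 ^ n) (a + k - 2 ^ n) d ≤ cnt 0 a d := by
            have := ih (k - 2 ^ n) a d (by omega)
            rwa [show k - 2 ^ n + a = a + k - 2 ^ n from by omega] at this
          have e6 : cnt 0 a d ≤ cnt 0 a (d + 1) := cnt_mono_d (by omega)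
          omega

lemma valB_succ {n : ℕ} (x : Fin (n + 1) → Fin 2) :
    valB x = (x 0 : ℕ) * 2 ^ n + valB (fun i => x i.succ) := by
  unfold valB
  rw [Fin.sum_univ_succ]
  have hterm : ∀ i : Fin n, (x i.succ : ℕ) * 2 ^ (n + 1 - 1 - (i.succ : ℕ))
      = (x i.succ : ℕ) * 2 ^ (n - 1 - (i : ℕ)) := by
    intro i
    congr 2
    simp only [Fin.val_succ]
    omega
  rw [Finset.sum_congr rfl (fun i _ => hterm i)]
  norm_num

lemma valB_lt {n : ℕ} (x : Fin n → Fin 2) : valB x < 2 ^ n := by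
  induction n with
  | zero => simp [valB]
  | succ n ih =>
    rw [valB_succ]
    have h1 := ih (fun i => x i.succ)
    have h0 : (x 0 : ℕ) = 0 ∨ (x 0 : ℕ) = 1 := by omega
    have hp : (2:ℕ) ^ (n + 1) = 2 ^ n + 2 ^ n := by ring
    rcases h0 with h0 | h0 <;> rw [h0] <;> omega

lemma w_valB {n : ℕ} (x : Fin n → Fin 2) : w (valB x) = ∑ i, (x i : ℕ) := by
  induction n with
  | zero => simp [valB, w_zero]
  | succ n ih =>
    rw [valB_succ, Fin.sum_univ_succ, ← ih (fun i => x i.succ)]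
    have h0 : (x 0 : ℕ) = 0 ∨ (x 0 : ℕ) = 1 := by omega
    rcases h0 with h0 | h0 <;> rw [h0]
    · simp
    · rw [one_mul, w_pow_add (valB_lt _)]

lemma valB_inj {n : ℕ} : Function.Injective (valB (n := n)) := by
  induction n with
  | zero =>
    intro x y _
    funext i
    exact i.elim0
  | succ n ih =>
    intro x y hxy
    rw [valB_succ x, valB_succ y] at hxy
    have hx := valB_lt (fun i => x i.succ)
    have hy := valB_lt (fun i => y i.succ)
    have hx0 : (x 0 : ℕ) = 0 ∨ (x 0 : ℕ) = 1 := by omega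
    have hy0 : (y 0 : ℕ) = 0 ∨ (y 0 : ℕ) = 1 := by omega
    have h0 : x 0 = y 0 := by
      rcases hx0 with h | h <;> rcases hy0 with h' | h' <;>
        (apply Fin.ext; rw [h, h'] at hxy ⊢) <;> omega
    have htail : (fun i : Fin n => x i.succ) = (fun i : Fin n => y i.succ) := by
      apply ih
      rw [h0] at hxy
      omega
    funext i
    refine Fin.cases ?_ ?_ i
    · exact h0
    · intro j
      exact congrFun htail j

lemma valB_surj {n : ℕ} (t : ℕ) (ht : t < 2 ^ n) : ∃ x : Fin n → Fin 2, valB x = t := by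
  induction n generalizing t with
  | zero =>
    exact ⟨fun i => 0, by simp [valB]; omega⟩
  | succ n ih =>
    obtain ⟨x', hx'⟩ := ih (t % 2 ^ n) (Nat.mod_lt _ (by positivity))
    have hb : t / 2 ^ n < 2 := by
      rw [Nat.div_lt_iff_lt_mul (by positivity)]
      have : (2:ℕ) ^ (n + 1) = 2 ^ n * 2 := by ring
      omega
    refine ⟨Fin.cons ⟨t / 2 ^ n, hb⟩ x', ?_⟩
    rw [valB_succ]
    simp only [Fin.cons_zero, Fin.cons_succ]
    rw [hx']
    have h1 := Nat.div_add_mod t (2 ^ n)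
    have h2 : t / 2 ^ n * 2 ^ n = 2 ^ n * (t / 2 ^ n) := by ring
    omega

lemma card_bridge {n : ℕ} (p : ℕ → Prop) [DecidablePred p] :
    (Finset.univ.filter (fun x : Fin n → Fin 2 => p (valB x))).card
      = ((Finset.range (2 ^ n)).filter p).card := by
  apply Finset.card_bij (fun x _ => valB x)
  · intro x hx
    simp only [Finset.mem_filter, Finset.mem_univ, Finset.mem_range, true_and] at hx ⊢
    exact ⟨valB_lt x, hx⟩
  · intro x _ y _ hxy
    exact valB_inj hxy
  · intro t ht
    simp only [Finset.mem_filter, Finset.mem_range] at ht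
    obtain ⟨x, hx⟩ := valB_surj t ht.1
    exact ⟨x, by simp only [Finset.mem_filter, Finset.mem_univ, true_and]; rw [hx]; exact ht.2, hx⟩


/-- If `S ⊆ {0,1}^n` is a contiguous set of size `k` (all strings lexicographically
between its min and max), then the set `M(k)` of the `k` lexicographically smallest
strings has at least as many strings of Hamming weight `≤ d` as `S` does. -/
theorem stmt5 (n k d a : ℕ) (hk : k ≤ 2 ^ n) (ha : a + k ≤ 2 ^ n)
    (S : Finset (Fin n → Fin 2))
    (hS : S = Finset.univ.filter (fun x => a ≤ valB x ∧ valB x < a + k)) :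
    (S.filter (fun x => (∑ i, (x i : ℕ)) ≤ d)).card ≤
      ((Finset.univ.filter (fun x : Fin n → Fin 2 => valB x < k)).filter
        (fun x => (∑ i, (x i : ℕ)) ≤ d)).card := by
  subst hS
  have hL : ((Finset.univ.filter (fun x : Fin n → Fin 2 => a ≤ valB x ∧ valB x < a + k)).filter
      (fun x => (∑ i, (x i : ℕ)) ≤ d)).card = cnt a (a + k) d := by
    rw [Finset.filter_filter]
    have e1 : (Finset.univ.filter
        (fun x : Fin n → Fin 2 => (a ≤ valB x ∧ valB x < a + k) ∧ (∑ i, (x i : ℕ)) ≤ d)).card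
        = (Finset.univ.filter
        (fun x : Fin n → Fin 2 => (a ≤ valB x ∧ valB x < a + k) ∧ w (valB x) ≤ d)).card := by
      congr 1
      apply Finset.filter_congr
      intro x _
      rw [w_valB]
    have e2 : (Finset.univ.filter
        (fun x : Fin n → Fin 2 => (a ≤ valB x ∧ valB x < a + k) ∧ w (valB x) ≤ d)).card
        = ((Finset.range (2 ^ n)).filter (fun t => (a ≤ t ∧ t < a + k) ∧ w t ≤ d)).card :=
      card_bridge (p := fun t => (a ≤ t ∧ t < a + k) ∧ w t ≤ d)
    rw [e1, e2]
    unfold cnt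
    congr 1
    ext t
    simp only [Finset.mem_filter, Finset.mem_range, Finset.mem_Ico]
    constructor
    · rintro ⟨_, ⟨h1, h2⟩, h3⟩; exact ⟨⟨h1, h2⟩, h3⟩
    · rintro ⟨⟨h1, h2⟩, h3⟩; exact ⟨lt_of_lt_of_le h2 ha, ⟨h1, h2⟩, h3⟩
  have hR : ((Finset.univ.filter (fun x : Fin n → Fin 2 => valB x < k)).filter
      (fun x => (∑ i, (x i : ℕ)) ≤ d)).card = cnt 0 k d := by
    rw [Finset.filter_filter]
    have e1 : (Finset.univ.filter
        (fun x : Fin n → Fin 2 => valB x < k ∧ (∑ i, (x i : ℕ)) ≤ d)).card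
        = (Finset.univ.filter
        (fun x : Fin n → Fin 2 => valB x < k ∧ w (valB x) ≤ d)).card := by
      congr 1
      apply Finset.filter_congr
      intro x _
      rw [w_valB]
    have e2 : (Finset.univ.filter
        (fun x : Fin n → Fin 2 => valB x < k ∧ w (valB x) ≤ d)).card
        = ((Finset.range (2 ^ n)).filter (fun t => t < k ∧ w t ≤ d)).card :=
      card_bridge (p := fun t => t < k ∧ w t ≤ d)
    rw [e1, e2]
    unfold cnt
    congr 1
    ext t
    simp only [Finset.mem_filter, Finset.mem_range, Finset.mem_Ico]
    constructor
    · rintro ⟨_, h1, h2⟩; exact ⟨⟨Nat.zero_le _, h1⟩, h2⟩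
    · rintro ⟨⟨_, h1⟩, h2⟩; exact ⟨lt_of_lt_of_le h1 hk, h1, h2⟩
  rw [hL, hR]
  have := main n a k d ha
  exact this
end

section
/- For every n, k, d ∈ ℕ with k ≤ 2^n, every down-closed subset T ⊆ {0,1}^n of size k contains at least binom(⌊log₂ k⌋, ≤d) elements of Hamming weight at most d, where binom(m, ≤d) = ∑_{i=0}^d C(m,i). -/
/-!
Read `j < 2 ^ n` as the set of positions of its binary ones, and let `c(k, d)` count the
`j < k` with fewer than `d` ones (`lowWeightCount`). Splitting a down-set `T` by its first
coordinate gives fibres `T₁ ⊆ T₀`, both down-sets, and the number `f_T(d)` of elements of `T`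
of weight `< d` splits as `f_T(d) = f_{T₀}(d) + f_{T₁}(d - 1)`. The binary counting function
obeys the matching inequality `c(a + b, d) ≤ c(a, d) + c(b, d - 1)` for `b ≤ a` (induction on
the binary digits of `a` and `b`), so by induction on `n` every down-set of size `k` has at
least `c(k, d)` elements of weight `< d`. Finally `c` is monotone in `k`, `2 ^ ⌊log₂ k⌋ ≤ k`,
and `c(2 ^ m, d + 1) = ∑_{i ≤ d} C(m, i)` by Pascal's rule.
-/

open Finset

namespace Nat

theorem count_two_mul (p : ℕ → Prop) [DecidablePred p] (q : ℕ) :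
    count p (2 * q) = count (fun i => p (2 * i)) q + count (fun i => p (2 * i + 1)) q := by
  induction q with
  | zero => simp
  | succ q ih =>
    rw [show 2 * (q + 1) = 2 * q + 1 + 1 by ring, count_succ, count_succ, ih, count_succ,
      count_succ]
    ring

theorem count_two_mul_add_one (p : ℕ → Prop) [DecidablePred p] (q : ℕ) :
    count p (2 * q + 1) =
      count (fun i => p (2 * i)) (q + 1) + count (fun i => p (2 * i + 1)) q := by
  rw [count_succ, count_two_mul, count_succ]
  ring

theorem sum_range_choose_succ (m d : ℕ) :
    ∑ i ∈ range d, (m + 1).choose i =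
      ∑ i ∈ range d, m.choose i + ∑ i ∈ range (d - 1), m.choose i := by
  cases d with
  | zero => simp
  | succ d =>
    rw [sum_range_succ', sum_range_succ' (fun i => m.choose i), add_tsub_cancel_right]
    simp only [choose_succ_succ', sum_add_distrib, choose_zero_right]
    ring

end Nat

def lowWeightCount (k d : ℕ) : ℕ := Nat.count (fun j => j.bitIndices.length < d) k

theorem lowWeightCount_two_mul (q d : ℕ) :
    lowWeightCount (2 * q) d = lowWeightCount q d + lowWeightCount q (d - 1) := by
  simp only [lowWeightCount, Nat.count_two_mul, Nat.bitIndices_two_mul,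
    Nat.bitIndices_two_mul_add_one, List.length_cons, List.length_map, Nat.lt_sub_iff_add_lt]

theorem lowWeightCount_two_mul_add_one (q d : ℕ) :
    lowWeightCount (2 * q + 1) d = lowWeightCount (q + 1) d + lowWeightCount q (d - 1) := by
  simp only [lowWeightCount, Nat.count_two_mul_add_one, Nat.bitIndices_two_mul,
    Nat.bitIndices_two_mul_add_one, List.length_cons, List.length_map, Nat.lt_sub_iff_add_lt]

theorem lowWeightCount_add_succ_le (q d : ℕ) :
    lowWeightCount q d + lowWeightCount (q + 1) (d - 1) ≤
      lowWeightCount (q + 1) d + lowWeightCount q (d - 1) := by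
  simp only [lowWeightCount, Nat.count_succ]
  split_ifs <;> omega

theorem lowWeightCount_two_pow (m d : ℕ) :
    lowWeightCount (2 ^ m) d = ∑ i ∈ range d, m.choose i := by
  induction m generalizing d with
  | zero => cases d <;> simp [lowWeightCount, Nat.count_one, sum_range_succ']
  | succ m ih => rw [pow_succ', lowWeightCount_two_mul, ih, ih, Nat.sum_range_choose_succ]

theorem lowWeightCount_add_le {a b : ℕ} (hba : b ≤ a) (d : ℕ) :
    lowWeightCount (a + b) d ≤ lowWeightCount a d + lowWeightCount b (d - 1) := by
  induction a using Nat.strong_induction_on generalizing b d with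
  | _ a ih =>
  rcases Nat.eq_zero_or_pos b with rfl | hb
  · simp [lowWeightCount]
  rcases hba.eq_or_lt with rfl | hba
  · rw [← two_mul, lowWeightCount_two_mul]
  obtain ⟨a, rfl | rfl⟩ := Nat.even_or_odd' a <;>
    obtain ⟨b, rfl | rfl⟩ := Nat.even_or_odd' b
  · rw [← mul_add, lowWeightCount_two_mul, lowWeightCount_two_mul, lowWeightCount_two_mul]
    have h₁ := ih a (by omega) (b := b) (by omega) d
    have h₂ := ih a (by omega) (b := b) (by omega) (d - 1)
    omega
  · rw [show 2 * a + (2 * b + 1) = 2 * (a + b) + 1 by ring, lowWeightCount_two_mul_add_one,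
      lowWeightCount_two_mul, lowWeightCount_two_mul_add_one]
    have h₁ : lowWeightCount (a + b + 1) d ≤ _ := ih a (by omega) (b := b + 1) (by omega) d
    have h₂ := ih a (by omega) (b := b) (by omega) (d - 1)
    omega
  · rw [show 2 * a + 1 + 2 * b = 2 * (a + b) + 1 by ring, lowWeightCount_two_mul_add_one,
      lowWeightCount_two_mul_add_one, lowWeightCount_two_mul]
    have h₁ := ih (a + 1) (by omega) (b := b) (by omega) d
    have h₂ := ih a (by omega) (b := b) (by omega) (d - 1)
    rw [add_right_comm] at h₁
    omega
  · rw [show 2 * a + 1 + (2 * b + 1) = 2 * (a + b + 1) by ring, lowWeightCount_two_mul,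
      lowWeightCount_two_mul_add_one, lowWeightCount_two_mul_add_one]
    have h₁ := ih (a + 1) (by omega) (b := b) (by omega) d
    have h₂ : lowWeightCount (a + b + 1) (d - 1) ≤ _ :=
      ih a (by omega) (b := b + 1) (by omega) (d - 1)
    -- the halves of `a + b` now pair `⌈a/2⌉` with `⌊b/2⌋`, which costs an exchange step
    have h₃ := lowWeightCount_add_succ_le b (d - 1)
    rw [add_right_comm] at h₁
    omega

namespace Finset

variable {α : Type*} {n : ℕ}

noncomputable def consFiber (T : Finset (Fin (n + 1) → α)) (b : α) : Finset (Fin n → α) :=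
  T.preimage (Fin.cons (α := fun _ => α) b)
    (Fin.cons_right_injective (α := fun _ => α) b).injOn

@[simp] theorem mem_consFiber {T : Finset (Fin (n + 1) → α)} {b : α} {y : Fin n → α} :
    y ∈ T.consFiber b ↔ Fin.cons b y ∈ T :=
  mem_preimage

theorem card_eq_sum_card_consFiber [Fintype α] (T : Finset (Fin (n + 1) → α)) :
    #T = ∑ b, #(T.consFiber b) := by
  classical
  rw [card_eq_sum_card_fiberwise (f := fun x => x 0) (t := univ) (by simp)]
  refine sum_congr rfl fun b _ => ?_
  rw [consFiber, card_preimage]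
  congr! 2 with x
  exact ⟨fun h => ⟨Fin.tail x, by rw [← h, Fin.cons_self_tail]⟩, by rintro ⟨y, rfl⟩; rfl⟩

theorem consFiber_subset_consFiber [Preorder α] {T : Finset (Fin (n + 1) → α)}
    (hT : IsLowerSet (T : Set (Fin (n + 1) → α))) {b c : α} (hbc : b ≤ c) :
    T.consFiber c ⊆ T.consFiber b := fun y hy => by
  simp only [mem_consFiber] at hy ⊢
  exact hT (Fin.cons_le_cons.2 ⟨hbc, le_rfl⟩) hy

theorem card_filter_weight_lt_eq_add (T : Finset (Fin (n + 1) → Fin 2)) (d : ℕ) :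
    #{x ∈ T | ∑ i, (x i : ℕ) < d} =
      #{y ∈ T.consFiber 0 | ∑ i, (y i : ℕ) < d} +
        #{y ∈ T.consFiber 1 | ∑ i, (y i : ℕ) < d - 1} := by
  rw [card_eq_sum_card_consFiber, Fin.sum_univ_two]
  congr 2 <;> ext y <;>
    simp only [mem_consFiber, mem_filter, Fin.sum_univ_succ, Fin.cons_zero, Fin.cons_succ,
      Fin.val_zero, Fin.val_one, zero_add, Nat.lt_sub_iff_add_lt, add_comm]

end Finset

theorem IsLowerSet.consFiber {α : Type*} [Preorder α] {n : ℕ} {T : Finset (Fin (n + 1) → α)}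
    (hT : IsLowerSet (T : Set (Fin (n + 1) → α))) (b : α) :
    IsLowerSet (T.consFiber b : Set (Fin n → α)) := fun _ _ hyx hx => by
  simp only [mem_coe, mem_consFiber] at hx ⊢
  exact hT (Fin.cons_le_cons.2 ⟨le_rfl, hyx⟩) hx

theorem lowWeightCount_card_le_card_filter {n : ℕ} {T : Finset (Fin n → Fin 2)}
    (hT : IsLowerSet (T : Set (Fin n → Fin 2))) (d : ℕ) :
    lowWeightCount #T d ≤ #{x ∈ T | ∑ i, (x i : ℕ) < d} := by
  induction n generalizing d with
  | zero =>
    cases d with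
    | zero => simp [lowWeightCount]
    | succ d => simpa [lowWeightCount] using Nat.count_le (n := #T) _
  | succ n ih =>
    have hcard : #T = #(T.consFiber 0) + #(T.consFiber 1) := by
      rw [card_eq_sum_card_consFiber, Fin.sum_univ_two]
    calc lowWeightCount #T d
        ≤ lowWeightCount #(T.consFiber 0) d + lowWeightCount #(T.consFiber 1) (d - 1) :=
          hcard ▸ lowWeightCount_add_le
            (card_le_card (consFiber_subset_consFiber hT zero_le_one)) d
      _ ≤ #{y ∈ T.consFiber 0 | ∑ i, (y i : ℕ) < d} +
            #{y ∈ T.consFiber 1 | ∑ i, (y i : ℕ) < d - 1} :=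
          add_le_add (ih (hT.consFiber 0) d) (ih (hT.consFiber 1) (d - 1))
      _ = #{x ∈ T | ∑ i, (x i : ℕ) < d} := (card_filter_weight_lt_eq_add T d).symm

theorem stmt8_general (n k d : ℕ) (hk1 : 1 ≤ k)
    (T : Finset (Fin n → Fin 2))
    (hdown : ∀ x y : Fin n → Fin 2, (∀ i, (x i : ℕ) ≤ (y i : ℕ)) → y ∈ T → x ∈ T)
    (hcard : T.card = k) :
    ∑ i ∈ Finset.range (d + 1), (Nat.log 2 k).choose i ≤
      (T.filter (fun x => (∑ i, (x i : ℕ)) ≤ d)).card := by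
  have hT : IsLowerSet (T : Set (Fin n → Fin 2)) := fun y x hxy hy => hdown x y hxy hy
  calc ∑ i ∈ range (d + 1), (Nat.log 2 k).choose i
      = lowWeightCount (2 ^ Nat.log 2 k) (d + 1) := (lowWeightCount_two_pow _ _).symm
    _ ≤ lowWeightCount k (d + 1) :=
      Nat.count_monotone _ (Nat.pow_log_le_self 2 (by omega))
    _ ≤ #{x ∈ T | ∑ i, (x i : ℕ) < d + 1} :=
      hcard ▸ lowWeightCount_card_le_card_filter hT _
    _ = #{x ∈ T | ∑ i, (x i : ℕ) ≤ d} := by simp only [Nat.lt_succ_iff]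

/-- Every down-closed subset `T ⊆ {0,1}^n` of size `k ≥ 1` contains at least
`∑_{i=0}^d C(⌊log₂ k⌋, i)` elements of Hamming weight at most `d`. -/
theorem stmt8 (n k d : ℕ) (hk1 : 1 ≤ k) (hk : k ≤ 2 ^ n)
    (T : Finset (Fin n → Fin 2))
    (hdown : ∀ x y : Fin n → Fin 2, (∀ i, (x i : ℕ) ≤ (y i : ℕ)) → y ∈ T → x ∈ T)
    (hcard : T.card = k) :
    ∑ i ∈ Finset.range (d + 1), (Nat.log 2 k).choose i ≤
      (T.filter (fun x => (∑ i, (x i : ℕ)) ≤ d)).card :=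
  stmt8_general n k d hk1 T hdown hcard
end

section
/- Let n, d ≥ 1, let S ⊆ F_2^n be nonempty, and let f : S → F_2 be any function. Then the probability that a uniformly random multilinear polynomial p of total degree ≤ d on n variables satisfies p|_S ≡ f is at most 2^{−h_S(d, F_2)}, where h_S(d, F_2) is the Hilbert function of S. -/
/-!
Let `V` be the space of multilinear polynomials of degree `≤ d` and `L : V → (S → 𝔽₂)` restriction
to `S`. The polynomials restricting to `f` form a fiber of `L`, which is empty or a coset of
`ker L`, so there are at most `|ker L| = |V| / 2 ^ rank L` of them. Since `x ^ k = x` on `𝔽₂`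
for `k ≥ 1`, capping every exponent of a polynomial at `1` does not change its restriction to `S`,
so `L` has the same image as restriction of all polynomials of degree `≤ d`, and
`rank L = h_S(d, 𝔽₂)`.
-/

noncomputable def hilbertFn (F : Type) [Field F] {n : ℕ} (d : ℕ) (S : Set (Fin n → F)) : ℕ :=
  Module.finrank F (Submodule.span F
    {f : S → F | ∃ p : MvPolynomial (Fin n) F, p.totalDegree ≤ d ∧
      ∀ s : S, MvPolynomial.eval (s : Fin n → F) p = f s})

theorem AddMonoidHom.ncard_preimage_singleton_le_card_ker {G H : Type*} [AddGroup G] [AddGroup H]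
    [Finite G] (φ : G →+ H) (h : H) : (φ ⁻¹' {h}).ncard ≤ Nat.card φ.ker := by
  rcases (φ ⁻¹' {h}).eq_empty_or_nonempty with hempty | ⟨g₀, hg₀⟩
  · simp [hempty]
  rw [← Nat.card_coe_set_eq]
  refine Nat.card_le_card_of_injective (fun g => ⟨-g₀ + g, ?_⟩) fun a b hab => ?_
  · rw [AddMonoidHom.mem_ker, map_add, map_neg, hg₀, show φ g = h from g.2, neg_add_cancel]
  · exact Subtype.ext (add_left_cancel (congrArg Subtype.val hab))

theorem LinearMap.ncard_preimage_singleton_mul_le {K V W : Type*} [Field K] [Finite K]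
    [AddCommGroup V] [Module K V] [Module.Finite K V] [AddCommGroup W] [Module K W]
    (L : V →ₗ[K] W) (w : W) :
    (L ⁻¹' {w}).ncard * Nat.card K ^ Module.finrank K (LinearMap.range L) ≤ Nat.card V := by
  have : Finite V := Module.finite_of_finite K
  calc (L ⁻¹' {w}).ncard * Nat.card K ^ Module.finrank K (LinearMap.range L)
      ≤ Nat.card (LinearMap.ker L) * Nat.card K ^ Module.finrank K (LinearMap.range L) :=
        Nat.mul_le_mul_right _ (L.toAddMonoidHom.ncard_preimage_singleton_le_card_ker w)
    _ = Nat.card V := by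
        rw [Module.natCard_eq_pow_finrank (K := K) (V := LinearMap.ker L),
          Module.natCard_eq_pow_finrank (K := K) (V := V),
          ← pow_add, add_comm, L.finrank_range_add_finrank_ker]

theorem IsIdempotentElem.pow_min_one {M : Type*} [Monoid M] {x : M} (hx : IsIdempotentElem x)
    (k : ℕ) : x ^ min k 1 = x ^ k := by
  rcases k with _ | k
  · rfl
  · rw [min_eq_right (Nat.le_add_left 1 k), pow_one, hx.pow_succ_eq]

namespace MvPolynomial

variable {σ R : Type*} [CommSemiring R]

theorem mem_restrictDegree_iff_degreeOf_le (p : MvPolynomial σ R) (k : ℕ) :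
    p ∈ restrictDegree σ R k ↔ ∀ i, p.degreeOf i ≤ k := by
  simp only [mem_restrictDegree, degreeOf_le_iff]
  exact ⟨fun h i m hm => h m hm i, fun h m hm i => h i m hm⟩

variable (R) in
noncomputable def restrictEval (S : Set (σ → R)) : MvPolynomial σ R →ₗ[R] S → R :=
  (LinearMap.funLeft R R ((↑) : S → σ → R)).comp (evalₗ R σ)

@[simp]
theorem restrictEval_apply (S : Set (σ → R)) (p : MvPolynomial σ R) (s : S) :
    restrictEval R S p s = eval (s : σ → R) p := rfl

noncomputable def multilinearize (p : MvPolynomial σ R) : MvPolynomial σ R :=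
  ∑ m ∈ p.support, monomial (m.mapRange (min · 1) (by simp)) (p.coeff m)

theorem eval_multilinearize {x : σ → R} (hx : ∀ i, IsIdempotentElem (x i))
    (p : MvPolynomial σ R) : eval x (multilinearize p) = eval x p := by
  conv_rhs => rw [p.as_sum]
  simp only [multilinearize, map_sum, eval_monomial]
  refine Finset.sum_congr rfl fun m _ => congrArg _ ?_
  rw [Finsupp.prod_mapRange_index fun _ => pow_zero _]
  exact Finsupp.prod_congr fun i _ => (hx i).pow_min_one _

theorem totalDegree_multilinearize_le (p : MvPolynomial σ R) :
    (multilinearize p).totalDegree ≤ p.totalDegree := by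
  refine totalDegree_finsetSum_le fun m hm => (totalDegree_monomial_le _ _).trans ?_
  refine le_trans ?_ (le_totalDegree hm)
  rw [Finsupp.sum_mapRange_index fun _ => rfl]
  exact Finsupp.sum_le_sum fun i _ => min_le_left _ _

theorem multilinearize_mem_restrictDegree_one (p : MvPolynomial σ R) :
    multilinearize p ∈ restrictDegree σ R 1 := by
  refine Submodule.sum_mem _ fun m _ => ?_
  rw [mem_restrictDegree]
  intro m' hm' i
  rw [Finset.mem_singleton.mp (support_monomial_subset hm')]
  exact min_le_right _ _

theorem map_restrictEval_inf_restrictDegree_one {S : Set (σ → R)}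
    (hS : ∀ x ∈ S, ∀ i, IsIdempotentElem (x i)) (d : ℕ) :
    (restrictTotalDegree σ R d ⊓ restrictDegree σ R 1).map (restrictEval R S) =
      (restrictTotalDegree σ R d).map (restrictEval R S) := by
  refine le_antisymm (Submodule.map_mono inf_le_left) ?_
  rintro _ ⟨p, hp, rfl⟩
  refine ⟨multilinearize p, ⟨?_, multilinearize_mem_restrictDegree_one p⟩, ?_⟩
  · rw [SetLike.mem_coe, mem_restrictTotalDegree] at hp ⊢
    exact (totalDegree_multilinearize_le p).trans hp
  · funext s
    exact eval_multilinearize (hS s s.2) p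

end MvPolynomial

open MvPolynomial

theorem hilbertFn_eq_finrank_map_restrictEval (F : Type) [Field F] {n : ℕ} (d : ℕ)
    (S : Set (Fin n → F)) :
    hilbertFn F d S =
      Module.finrank F ((restrictTotalDegree (Fin n) F d).map (restrictEval F S)) := by
  have hset : {f : S → F | ∃ p : MvPolynomial (Fin n) F, p.totalDegree ≤ d ∧
      ∀ s : S, eval (s : Fin n → F) p = f s} =
      ((restrictTotalDegree (Fin n) F d).map (restrictEval F S) : Set (S → F)) := by
    ext f
    simp [mem_restrictTotalDegree, funext_iff]
  rw [hilbertFn, hset, Submodule.span_eq]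

theorem stmt16_general (n d : ℕ)
    (S : Set (Fin n → ZMod 2)) (f : S → ZMod 2) :
    Set.ncard {p : MvPolynomial (Fin n) (ZMod 2) |
        (p.totalDegree ≤ d ∧ ∀ i, p.degreeOf i ≤ 1) ∧
        ∀ x : S, MvPolynomial.eval (x : Fin n → ZMod 2) p = f x}
      * 2 ^ hilbertFn (ZMod 2) d S
    ≤ Set.ncard {p : MvPolynomial (Fin n) (ZMod 2) |
        p.totalDegree ≤ d ∧ ∀ i, p.degreeOf i ≤ 1} := by
  set V := restrictTotalDegree (Fin n) (ZMod 2) d ⊓ restrictDegree (Fin n) (ZMod 2) 1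
  have hV : {p : MvPolynomial (Fin n) (ZMod 2) | p.totalDegree ≤ d ∧ ∀ i, p.degreeOf i ≤ 1} =
      (V : Set _) := by
    ext p
    simp [V, mem_restrictTotalDegree, mem_restrictDegree_iff_degreeOf_le]
  have hfiber : {p : MvPolynomial (Fin n) (ZMod 2) |
      (p.totalDegree ≤ d ∧ ∀ i, p.degreeOf i ≤ 1) ∧ ∀ x : S, eval (x : Fin n → ZMod 2) p = f x} =
      Subtype.val '' ((restrictEval (ZMod 2) S).domRestrict V ⁻¹' {f}) := by
    ext p
    simp [V, mem_restrictTotalDegree, mem_restrictDegree_iff_degreeOf_le, funext_iff, and_comm]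
  have hrange : LinearMap.range ((restrictEval (ZMod 2) S).domRestrict V) =
      (restrictTotalDegree (Fin n) (ZMod 2) d).map (restrictEval (ZMod 2) S) := by
    rw [LinearMap.range_domRestrict]
    exact map_restrictEval_inf_restrictDegree_one
      (fun x _ i => (sq (x i)).symm.trans (ZMod.pow_card (x i))) d
  have hcount :=
    LinearMap.ncard_preimage_singleton_mul_le ((restrictEval (ZMod 2) S).domRestrict V) f
  rw [Nat.card_zmod, hrange, ← hilbertFn_eq_finrank_map_restrictEval] at hcount
  rwa [hV, hfiber, Set.ncard_image_of_injective _ Subtype.val_injective, ← Nat.card_coe_set_eq]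

/-- For nonempty `S ⊆ F_2^n` and any `f : S → F_2`, the probability that a uniformly
random multilinear polynomial of total degree `≤ d` restricts to `f` on `S` is at most
`2^{−h_S(d,F_2)}`; stated as: (number of such polynomials agreeing with `f` on `S`)
times `2^{h_S(d,F_2)}` is at most the total number of such polynomials. -/
theorem stmt16 (n d : ℕ) (hn : 1 ≤ n) (hd : 1 ≤ d)
    (S : Set (Fin n → ZMod 2)) (hS : S.Nonempty) (f : S → ZMod 2) :
    Set.ncard {p : MvPolynomial (Fin n) (ZMod 2) |
        (p.totalDegree ≤ d ∧ ∀ i, p.degreeOf i ≤ 1) ∧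
        ∀ x : S, MvPolynomial.eval (x : Fin n → ZMod 2) p = f x}
      * 2 ^ hilbertFn (ZMod 2) d S
    ≤ Set.ncard {p : MvPolynomial (Fin n) (ZMod 2) |
        p.totalDegree ≤ d ∧ ∀ i, p.degreeOf i ≤ 1} :=
  stmt16_general n d S f
end

section
/- Let n, d, k ≥ 1 and let 𝒳 be a finite family of distributions over {0,1}^n, each with min-entropy at least k. Then a uniformly random multilinear polynomial p of degree ≤ d over F_2 is non-constant on the support of every distribution in 𝒳 (i.e., is a disperser for 𝒳) with probability at least 1 − |𝒳| · 2^{1 − ∑_{i=0}^d C(k,i)}. -/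
/-!
Let `h_S(d)` be the dimension of the space of functions on `S ⊆ 𝔽₂ⁿ` given by polynomials of
degree `≤ d`. Evaluating on `S` sends the polynomials constant on `S` into the line of constant
functions, so among the multilinear polynomials of degree `≤ d` at most a `2^(1 - h_S(d))`
fraction is constant on `S`; a union bound over the family gives the theorem once
`h_S(d) ≥ ∑_{i ≤ d} C(k, i)` whenever `|S| ≥ 2^k`.

For that bound, split `S` along a coordinate on which it is not constant into `S₀` and `S₁` with
`|S₁| ≤ |S₀|`; then `h_S(d+1) ≥ h_{S₀}(d+1) + h_{S₁}(d)`. By induction this gives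
`h_S(d) ≥ ψ_d(|S|)`, where `ψ_d(m)` counts the `t < m` with at most `d` ones in binary, provided
`ψ_{d+1}(a + b) ≤ ψ_{d+1}(a) + ψ_d(b)` for `b ≤ a`; and `ψ_d(2^k) = ∑_{i ≤ d} C(k, i)`.
The superadditivity rests on the fact that no window of `y` consecutive residues mod `2^M`
contains more numbers of weight `≤ d` than `[0, y)`.
-/

open Finset

def binWeight (n : ℕ) : ℕ := (Nat.digits 2 n).sum

lemma binWeight_eq_mod_add_div (n : ℕ) : binWeight n = n % 2 + binWeight (n / 2) := by
  rcases Nat.eq_zero_or_pos n with rfl | hn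
  · simp [binWeight]
  · simp [binWeight, Nat.digits_def' one_lt_two hn]

lemma binWeight_eq_div_add_mod (t m : ℕ) :
    binWeight t = binWeight (t / 2 ^ m) + binWeight (t % 2 ^ m) := by
  induction m generalizing t with
  | zero => simp [binWeight, Nat.mod_one]
  | succ m ih =>
    rw [binWeight_eq_mod_add_div t, ih (t / 2), binWeight_eq_mod_add_div (t % 2 ^ (m + 1)),
      pow_succ', Nat.div_div_eq_div_mul, Nat.mod_mul_right_mod, Nat.mod_mul_right_div_self]
    ring

lemma binWeight_eq_zero_iff {t : ℕ} : binWeight t = 0 ↔ t = 0 := by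
  induction t using Nat.strong_induction_on with
  | _ t ih =>
    rcases Nat.eq_zero_or_pos t with rfl | ht
    · simp [binWeight]
    · rw [binWeight_eq_mod_add_div, Nat.add_eq_zero_iff, ih _ (Nat.div_lt_self ht one_lt_two)]
      omega

lemma binWeight_two_pow_add {m r : ℕ} (hr : r < 2 ^ m) :
    binWeight (2 ^ m + r) = binWeight r + 1 := by
  have hdiv : (2 ^ m + r) / 2 ^ m = 1 := by
    rw [Nat.add_div_left _ (by positivity), Nat.div_eq_of_lt hr]
  have hone : binWeight 1 = 1 := by simp [binWeight]
  rw [binWeight_eq_div_add_mod _ m, hdiv, Nat.add_mod_left, Nat.mod_eq_of_lt hr, hone, add_comm]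

/-- `weightCount (d + 1)` is `ψ_d`. The strict bound makes `w - 1` the threshold after one `1` is
lost, with no special case at `w = 0`. -/
def weightCount (w m : ℕ) : ℕ := #{t ∈ range m | binWeight t < w}

def windowCount (w x y : ℕ) : ℕ := #{i ∈ range y | binWeight (x + i) < w}

lemma windowCount_zero (w y : ℕ) : windowCount w 0 y = weightCount w y := by
  simp [windowCount, weightCount]

lemma weightCount_add (w x y : ℕ) :
    weightCount w (x + y) = weightCount w x + windowCount w x y := by
  simp only [weightCount, windowCount, card_filter, sum_range_add]

lemma windowCount_add (w x y z : ℕ) :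
    windowCount w x (y + z) = windowCount w x y + windowCount w (x + y) z := by
  simp only [windowCount, card_filter, sum_range_add, add_assoc]

lemma windowCount_two_pow_add {w m x y : ℕ} (h : x + y ≤ 2 ^ m) :
    windowCount w (2 ^ m + x) y = windowCount (w - 1) x y := by
  unfold windowCount
  congr 1
  refine filter_congr fun i hi => ?_
  rw [add_assoc, binWeight_two_pow_add (by simp at hi; omega)]
  omega

lemma weightCount_two_pow_add {w m L : ℕ} (hL : L ≤ 2 ^ m) :
    weightCount w (2 ^ m + L) = weightCount w (2 ^ m) + weightCount (w - 1) L := by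
  rw [weightCount_add, ← add_zero (2 ^ m), windowCount_two_pow_add (by omega), add_zero,
    windowCount_zero]

lemma weightCount_two_pow (w k : ℕ) : weightCount w (2 ^ k) = ∑ i ∈ range w, k.choose i := by
  induction k generalizing w with
  | zero =>
    rcases w with _ | w
    · simp [weightCount]
    · rw [sum_range_succ', sum_eq_zero fun i _ => Nat.choose_eq_zero_of_lt (by omega)]
      simp [weightCount, binWeight, filter_singleton]
  | succ k ih =>
    rw [pow_succ, mul_two, weightCount_two_pow_add le_rfl, ih, ih]
    rcases w with _ | w
    · simp
    · simp only [sum_range_succ' _ w, Nat.choose_succ_succ, sum_add_distrib, add_tsub_cancel_right,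
        Nat.choose_zero_right]
      ring

lemma exists_eq_two_pow_add {y : ℕ} (hy : 0 < y) : ∃ m L, y = 2 ^ m + L ∧ L < 2 ^ m := by
  refine ⟨Nat.log 2 y, y - 2 ^ Nat.log 2 y,
    (Nat.add_sub_cancel' (Nat.pow_log_le_self 2 hy.ne')).symm, ?_⟩
  have := Nat.lt_pow_succ_log_self one_lt_two y
  rw [pow_succ] at this
  omega

lemma card_filter_add_mod_eq (N x : ℕ) [NeZero N] (p : ℕ → Prop) [DecidablePred p] :
    #{i ∈ range N | p ((x + i) % N)} = #{t ∈ range N | p t} := by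
  simp only [card_filter, ← Fin.sum_univ_eq_sum_range]
  refine Fintype.sum_equiv (Equiv.addLeft (Fin.ofNat N x)) _ _ fun i => ?_
  simp [Fin.val_add, Nat.add_mod]

lemma binWeight_mod_two_pow_le {m M : ℕ} (h : m ≤ M) (t : ℕ) :
    binWeight (t % 2 ^ m) ≤ binWeight (t % 2 ^ M) := by
  rw [binWeight_eq_div_add_mod (t % 2 ^ M) m, Nat.mod_mod_of_dvd _ (pow_dvd_pow 2 h)]
  omega

/-- Of `t` and `t + 2 ^ m` reduced mod `2 ^ M`, at least one has a one above bit `m`. -/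
lemma ite_binWeight_mod_add_ite_le {m M : ℕ} (h : m < M) (t w : ℕ) :
    (if binWeight (t % 2 ^ M) < w then 1 else 0) +
        (if binWeight ((t + 2 ^ m) % 2 ^ M) < w then 1 else 0) ≤
      (if binWeight (t % 2 ^ m) < w then 1 else 0) +
        (if binWeight (t % 2 ^ m) < w - 1 then 1 else 0) := by
  have hdvd : 2 ^ m ∣ 2 ^ M := pow_dvd_pow 2 h.le
  have h₁ := binWeight_eq_div_add_mod (t % 2 ^ M) m
  have h₂ := binWeight_eq_div_add_mod ((t + 2 ^ m) % 2 ^ M) m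
  rw [Nat.mod_mod_of_dvd _ hdvd] at h₁ h₂
  rw [Nat.add_mod_right] at h₂
  have hne : ¬ (t % 2 ^ M / 2 ^ m = 0 ∧ (t + 2 ^ m) % 2 ^ M / 2 ^ m = 0) := by
    rintro ⟨h0, h0'⟩
    rw [Nat.div_eq_zero_iff_lt (by positivity)] at h0 h0'
    have hmod : t + 0 ≡ t + 2 ^ m [MOD 2 ^ M] := by
      rw [add_zero, Nat.ModEq, ← Nat.mod_eq_of_lt h0, ← Nat.mod_eq_of_lt h0',
        Nat.mod_mod_of_dvd _ hdvd, Nat.mod_mod_of_dvd _ hdvd, Nat.add_mod_right]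
    have := Nat.ModEq.add_left_cancel' t hmod
    rw [Nat.ModEq, Nat.zero_mod, Nat.mod_eq_of_lt (Nat.pow_lt_pow_right one_lt_two h)] at this
    exact pow_ne_zero m two_ne_zero this.symm
  have hpos : binWeight (t % 2 ^ M / 2 ^ m) ≠ 0 ∨ binWeight ((t + 2 ^ m) % 2 ^ M / 2 ^ m) ≠ 0 := by
    simpa only [ne_eq, binWeight_eq_zero_iff, not_and_or] using hne
  split_ifs <;> omega

/-- With `y = 2 ^ m + L`, `L < 2 ^ m`, pair `i < L` with `2 ^ m + i`: both have the same residue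
mod `2 ^ m`, and one of them has an extra one. The residues mod `2 ^ m` then account for one full
period plus a window of length `L` with one fewer one allowed. -/
theorem card_filter_binWeight_mod_le (w x y M : ℕ) (hy : y ≤ 2 ^ M) :
    #{i ∈ range y | binWeight ((x + i) % 2 ^ M) < w} ≤ weightCount w y := by
  induction y using Nat.strong_induction_on generalizing w M with
  | _ y ih =>
  rcases Nat.eq_zero_or_pos y with rfl | hy0
  · simp
  obtain ⟨m, L, rfl, hL⟩ := exists_eq_two_pow_add hy0
  have hmM : m ≤ M := (Nat.pow_le_pow_iff_right one_lt_two).1 (by omega)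
  let P (i : ℕ) : ℕ := if binWeight ((x + i) % 2 ^ M) < w then 1 else 0
  let Q (v i : ℕ) : ℕ := if binWeight ((x + i) % 2 ^ m) < v then 1 else 0
  have hsplitm : ∀ f : ℕ → ℕ,
      ∑ i ∈ range (2 ^ m), f i = ∑ i ∈ range L, f i + ∑ i ∈ range (2 ^ m - L), f (L + i) :=
    fun f => by rw [← sum_range_add, Nat.add_sub_cancel' hL.le]
  have hpair : ∀ j ∈ range L, P j + P (2 ^ m + j) ≤ Q w j + Q (w - 1) j := fun j hj => by
    have hmM' : m < M := lt_of_le_of_ne hmM (by rintro rfl; simp at hj; omega)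
    simpa only [P, Q, show x + (2 ^ m + j) = x + j + 2 ^ m by ring]
      using ite_binWeight_mod_add_ite_le hmM' (x + j) w
  have hsingle : ∀ i, P i ≤ Q w i := fun i => by
    have := binWeight_mod_two_pow_le hmM (x + i)
    simp only [P, Q]; split_ifs <;> omega
  calc #{i ∈ range (2 ^ m + L) | binWeight ((x + i) % 2 ^ M) < w}
      = ∑ j ∈ range L, (P j + P (2 ^ m + j)) + ∑ i ∈ range (2 ^ m - L), P (L + i) := by
        rw [card_filter, sum_range_add, hsplitm, sum_add_distrib]; ring
    _ ≤ ∑ j ∈ range L, (Q w j + Q (w - 1) j) + ∑ i ∈ range (2 ^ m - L), Q w (L + i) :=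
        add_le_add (sum_le_sum hpair) (sum_le_sum fun i _ => hsingle _)
    _ = #{i ∈ range (2 ^ m) | binWeight ((x + i) % 2 ^ m) < w} +
          #{i ∈ range L | binWeight ((x + i) % 2 ^ m) < w - 1} := by
        rw [card_filter, card_filter, hsplitm, sum_add_distrib]; ring
    _ ≤ weightCount w (2 ^ m) + weightCount (w - 1) L := by
        rw [card_filter_add_mod_eq (2 ^ m) x (binWeight · < w)]
        exact Nat.add_le_add_left (ih L (by omega) _ _ hL.le) _
    _ = weightCount w (2 ^ m + L) := (weightCount_two_pow_add hL.le).symm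

/-- With `b = 2 ^ m + L`, `L < 2 ^ m`: if `a ≥ 2 ^ (m + 1)`, every element of the window has a one
above bit `m`, and the residues mod `2 ^ (m + 1)` form a cyclic window; otherwise `a = 2 ^ m + u`,
and stripping the top bit leaves `[0, 2 ^ m)` plus the window `[u, u + L)`, where we recurse. -/
theorem windowCount_le (w a b : ℕ) (hba : b ≤ a) : windowCount w a b ≤ weightCount (w - 1) b := by
  induction b using Nat.strong_induction_on generalizing a w with
  | _ b ih =>
  rcases Nat.eq_zero_or_pos b with rfl | hb0
  · simp [windowCount]
  obtain ⟨m, L, rfl, hL⟩ := exists_eq_two_pow_add hb0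
  rcases le_or_gt (2 ^ (m + 1)) a with ha | ha
  · calc windowCount w a (2 ^ m + L)
        ≤ #{i ∈ range (2 ^ m + L) | binWeight ((a + i) % 2 ^ (m + 1)) < w - 1} := by
          refine card_le_card (monotone_filter_right _ fun i hi => ?_)
          have hq : binWeight ((a + i) / 2 ^ (m + 1)) ≠ 0 := by
            rw [ne_eq, binWeight_eq_zero_iff, Nat.div_eq_zero_iff_lt (by positivity)]; omega
          have := binWeight_eq_div_add_mod (a + i) (m + 1)
          omega
      _ ≤ weightCount (w - 1) (2 ^ m + L) := card_filter_binWeight_mod_le _ _ _ _ (by omega)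
  · obtain ⟨u, rfl⟩ := Nat.exists_eq_add_of_le (le_trans (Nat.le_add_right _ L) hba)
    have hsplit : 2 ^ m + L = (2 ^ m - u) + (u + L) := by omega
    have htop : 2 ^ m + u + (2 ^ m - u) = 2 ^ (m + 1) + 0 := by omega
    calc windowCount w (2 ^ m + u) (2 ^ m + L)
        = windowCount (w - 1) u (2 ^ m - u) + weightCount (w - 1) (u + L) := by
          rw [hsplit, windowCount_add, htop, windowCount_two_pow_add (by omega),
            windowCount_two_pow_add (by omega), windowCount_zero]
      _ = weightCount (w - 1) (2 ^ m) + windowCount (w - 1) u L := by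
          rw [weightCount_add, ← add_assoc, add_comm (windowCount _ _ _), ← weightCount_add,
            Nat.add_sub_cancel' (by omega)]
      _ ≤ weightCount (w - 1) (2 ^ m) + weightCount (w - 1 - 1) L :=
          Nat.add_le_add_left (ih L (by omega) _ _ (by omega)) _
      _ = weightCount (w - 1) (2 ^ m + L) := (weightCount_two_pow_add hL.le).symm

theorem weightCount_add_le (w a b : ℕ) (hba : b ≤ a) :
    weightCount w (a + b) ≤ weightCount w a + weightCount (w - 1) b := by
  rw [weightCount_add]
  exact Nat.add_le_add_left (windowCount_le w a b hba) _

lemma weightCount_le (w m : ℕ) : weightCount w m ≤ m :=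
  (card_filter_le _ _).trans (card_range m).le

lemma weightCount_one_le (m : ℕ) : weightCount 1 m ≤ 1 := by
  refine (card_le_card fun t ht => ?_).trans (card_singleton 0).le
  rw [mem_filter, Nat.lt_one_iff, binWeight_eq_zero_iff] at ht
  exact mem_singleton.2 ht.2

lemma weightCount_mono (w : ℕ) : Monotone (weightCount w) := fun _ _ h =>
  card_le_card (filter_subset_filter _ (range_subset_range.2 h))

open MvPolynomial Module

theorem Submodule.finrank_map_add_finrank_inf_ker {K V W : Type*} [DivisionRing K]
    [AddCommGroup V] [Module K V] [AddCommGroup W] [Module K W] (f : V →ₗ[K] W)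
    (E : Submodule K V) [FiniteDimensional K E] :
    finrank K (E.map f) + finrank K ↥(E ⊓ LinearMap.ker f) = finrank K E := by
  rw [← LinearMap.finrank_range_add_finrank_ker (f.domRestrict E), LinearMap.range_domRestrict,
    LinearMap.ker_domRestrict]
  congr 1
  have h : (LinearMap.ker f).comap E.subtype = (E ⊓ LinearMap.ker f).comap E.subtype := by
    ext z
    simp
  rw [h]
  exact (Submodule.comapSubtypeEquivOfLe inf_le_left).finrank_eq.symm

theorem Submodule.finrank_inf_comap_add_finrank_map_le {K V W : Type*} [DivisionRing K]
    [AddCommGroup V] [Module K V] [AddCommGroup W] [Module K W] (f : V →ₗ[K] W)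
    (E : Submodule K V) [FiniteDimensional K E] (C : Submodule K W) [FiniteDimensional K C] :
    finrank K ↥(E ⊓ C.comap f) + finrank K (E.map f) ≤ finrank K C + finrank K E := by
  have : FiniteDimensional K ↥(E ⊓ C.comap f) := Submodule.finiteDimensional_of_le inf_le_left
  have : FiniteDimensional K ↥(E ⊓ LinearMap.ker f) := Submodule.finiteDimensional_of_le inf_le_left
  have himage : finrank K ((E ⊓ C.comap f).map f) ≤ finrank K C :=
    Submodule.finrank_mono ((Submodule.map_mono inf_le_right).trans (Submodule.map_comap_le f C))
  have hker : finrank K ↥(E ⊓ C.comap f ⊓ LinearMap.ker f) ≤ finrank K ↥(E ⊓ LinearMap.ker f) :=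
    Submodule.finrank_mono (inf_le_inf_right _ inf_le_left)
  have h₁ := Submodule.finrank_map_add_finrank_inf_ker f (E ⊓ C.comap f)
  have h₂ := Submodule.finrank_map_add_finrank_inf_ker f E
  omega

section Evaluation

variable {σ K : Type*} [Field K]

noncomputable def evalOn (S : Finset (σ → K)) : MvPolynomial σ K →ₗ[K] S → K :=
  (LinearMap.funLeft K K (Subtype.val : S → σ → K)).comp (evalₗ K σ)

@[simp]
lemma evalOn_apply (S : Finset (σ → K)) (p : MvPolynomial σ K) (x : S) :
    evalOn S p x = eval x.1 p := rfl

lemma evalOn_filter (S : Finset (σ → K)) (q : (σ → K) → Prop) [DecidablePred q] :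
    evalOn (S.filter q) =
      (LinearMap.funLeft K K (fun x : S.filter q => (⟨x.1, (mem_filter.1 x.2).1⟩ : S))).comp
        (evalOn S) :=
  rfl

/-- The paper's `h_S(d, K)`. -/
noncomputable def evalRank (S : Finset (σ → K)) (d : ℕ) : ℕ :=
  finrank K ((restrictTotalDegree σ K d).map (evalOn S))

lemma one_le_evalRank {S : Finset (σ → K)} (hS : S.Nonempty) (d : ℕ) : 1 ≤ evalRank S d := by
  obtain ⟨x, hx⟩ := hS
  rw [evalRank, Nat.one_le_iff_ne_zero, ne_eq, Submodule.finrank_eq_zero, Submodule.eq_bot_iff]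
  push Not
  refine ⟨evalOn S 1, Submodule.mem_map_of_mem ?_, fun h => ?_⟩
  · simp [mem_restrictTotalDegree]
  · simpa using congrFun h ⟨x, hx⟩

noncomputable def multilinearDegLE (σ R : Type*) [CommSemiring R] (d : ℕ) :
    Submodule R (MvPolynomial σ R) :=
  restrictTotalDegree σ R d ⊓ restrictDegree σ R 1

lemma mem_multilinearDegLE {R : Type*} [CommSemiring R] {d : ℕ} {p : MvPolynomial σ R} :
    p ∈ multilinearDegLE σ R d ↔ p.totalDegree ≤ d ∧ ∀ i, p.degreeOf i ≤ 1 := by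
  rw [multilinearDegLE, Submodule.mem_inf, mem_restrictTotalDegree, mem_restrictDegree]
  simp only [degreeOf_le_iff]
  exact and_congr_right' ⟨fun h i s hs => h s hs i, fun h s hs i => h i s hs⟩

instance [Finite σ] (d : ℕ) : FiniteDimensional K (multilinearDegLE σ K d) :=
  Submodule.finiteDimensional_of_le inf_le_left

end Evaluation

variable {σ : Type*}

/-- Splitting `S` along the hyperplane `x i = v`: polynomials of degree `≤ d + 1` restricted to
`S` contain, beside restrictions to `{x i = v}`, the multiples `(X i + v) p` with `deg p ≤ d`,
which vanish there and agree with `p` on `{x i ≠ v}`. -/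
theorem evalRank_filter_eq_add_evalRank_filter_ne_le (S : Finset (σ → ZMod 2)) (i : σ)
    (v : ZMod 2) (d : ℕ) :
    evalRank (S.filter (· i = v)) (d + 1) + evalRank (S.filter (· i ≠ v)) d ≤
      evalRank S (d + 1) := by
  set E := (restrictTotalDegree σ (ZMod 2) (d + 1)).map (evalOn S)
  set ρ := LinearMap.funLeft (ZMod 2) (ZMod 2)
    (fun x : S.filter (· i = v) => (⟨x.1, (mem_filter.1 x.2).1⟩ : S))
  set ρ' := LinearMap.funLeft (ZMod 2) (ZMod 2)
    (fun x : S.filter (· i ≠ v) => (⟨x.1, (mem_filter.1 x.2).1⟩ : S))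
  set G := (restrictTotalDegree σ (ZMod 2) d).map (LinearMap.mulLeft (ZMod 2) (X i + C v))
  have hG : G ≤ restrictTotalDegree σ (ZMod 2) (d + 1) := by
    rintro _ ⟨p, hp, rfl⟩
    rw [SetLike.mem_coe, mem_restrictTotalDegree] at hp
    rw [mem_restrictTotalDegree]
    refine (totalDegree_mul _ _).trans ?_
    have : (X i + C v : MvPolynomial σ (ZMod 2)).totalDegree ≤ 1 :=
      (totalDegree_add _ _).trans (by simp [totalDegree_X, totalDegree_C])
    omega
  have hker : G.map (evalOn S) ≤ E ⊓ LinearMap.ker ρ := by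
    rintro _ ⟨_, ⟨p, hp, rfl⟩, rfl⟩
    refine ⟨Submodule.mem_map_of_mem (hG (Submodule.mem_map_of_mem hp)), ?_⟩
    ext ⟨x, hx⟩
    simp [ρ, (mem_filter.1 hx).2, CharTwo.add_self_eq_zero]
  have hw : (G.map (evalOn S)).map ρ' =
      (restrictTotalDegree σ (ZMod 2) d).map (evalOn (S.filter (· i ≠ v))) := by
    rw [← Submodule.map_comp, ← Submodule.map_comp]
    congr 1
    ext p ⟨x, hx⟩
    have hxv : x i + v = 1 :=
      (by decide : ∀ a b : ZMod 2, a ≠ b → a + b = 1) _ _ (mem_filter.1 hx).2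
    simp [ρ', hxv]
  rw [evalRank, evalRank, evalRank, ← hw, evalOn_filter, Submodule.map_comp,
    ← Submodule.finrank_map_add_finrank_inf_ker ρ E]
  gcongr
  exact (Submodule.finrank_map_le _ _).trans (Submodule.finrank_mono hker)

lemma exists_filter_nonempty_card_le (S : Finset (σ → ZMod 2)) (hS : 1 < #S) :
    ∃ i v, (S.filter (· i = v)).Nonempty ∧ (S.filter (· i ≠ v)).Nonempty ∧
      #(S.filter (· i ≠ v)) ≤ #(S.filter (· i = v)) := by
  obtain ⟨x, hx, y, hy, hxy⟩ := one_lt_card.1 hS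
  obtain ⟨i, hi⟩ := Function.ne_iff.1 hxy
  have hcompl : ∀ b c : ZMod 2, b ≠ c → S.filter (· i ≠ b) = S.filter (· i = c) :=
    fun b c hbc => filter_congr fun z _ =>
      (by decide : ∀ a b c : ZMod 2, b ≠ c → (a ≠ b ↔ a = c)) _ _ _ hbc
  have hx' : x ∈ S.filter (· i = x i) := mem_filter.2 ⟨hx, rfl⟩
  have hy' : y ∈ S.filter (· i = y i) := mem_filter.2 ⟨hy, rfl⟩
  rcases le_total #(S.filter (· i = y i)) #(S.filter (· i = x i)) with h | h
  · refine ⟨i, x i, ⟨x, hx'⟩, ?_⟩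
    rw [hcompl _ _ hi]
    exact ⟨⟨y, hy'⟩, h⟩
  · refine ⟨i, y i, ⟨y, hy'⟩, ?_⟩
    rw [hcompl _ _ (Ne.symm hi)]
    exact ⟨⟨x, hx'⟩, h⟩

theorem weightCount_card_le_evalRank (S : Finset (σ → ZMod 2)) (d : ℕ) :
    weightCount (d + 1) #S ≤ evalRank S d := by
  induction hs : #S using Nat.strong_induction_on generalizing S d with
  | _ s ih =>
  subst hs
  rcases S.eq_empty_or_nonempty with rfl | hne
  · simp [weightCount]
  rcases d with _ | d
  · exact (weightCount_one_le _).trans (one_le_evalRank hne 0)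
  rcases le_or_gt #S 1 with h1 | h1
  · exact (weightCount_le _ _).trans (h1.trans (one_le_evalRank hne _))
  obtain ⟨i, v, hv, hnv, hle⟩ := exists_filter_nonempty_card_le S h1
  have hcard : #(S.filter (· i = v)) + #(S.filter (· i ≠ v)) = #S :=
    card_filter_add_card_filter_not _
  calc weightCount (d + 1 + 1) #S
      = weightCount (d + 2) (#(S.filter (· i = v)) + #(S.filter (· i ≠ v))) := by rw [hcard]
    _ ≤ weightCount (d + 2) #(S.filter (· i = v)) + weightCount (d + 1) #(S.filter (· i ≠ v)) :=
        weightCount_add_le _ _ _ hle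
    _ ≤ evalRank (S.filter (· i = v)) (d + 1) + evalRank (S.filter (· i ≠ v)) d :=
        add_le_add (ih _ (by have := hnv.card_pos; omega) _ _ rfl)
          (ih _ (by have := hv.card_pos; omega) _ _ rfl)
    _ ≤ evalRank S (d + 1) := evalRank_filter_eq_add_evalRank_filter_ne_le S i v d

/-- Over `ZMod 2` every exponent `e ≥ 1` acts like `1`, so replacing each exponent `e` by
`min e 1` does not change the function a monomial defines. -/
lemma map_evalOn_restrictTotalDegree_le (S : Finset (σ → ZMod 2)) (d : ℕ) :
    (restrictTotalDegree σ (ZMod 2) d).map (evalOn S) ≤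
      (multilinearDegLE σ (ZMod 2) d).map (evalOn S) := by
  rw [restrictTotalDegree, restrictSupport, AddMonoidAlgebra.supported_eq_span_single,
    Submodule.map_span_le]
  rintro _ ⟨α, hα, rfl⟩
  set β := α.mapRange (min · 1) (by simp)
  refine ⟨monomial β 1, mem_multilinearDegLE.2 ⟨?_, fun i => ?_⟩, ?_⟩
  · rw [totalDegree_monomial _ one_ne_zero, Finsupp.sum_mapRange_index (fun _ => rfl)]
    exact (Finsupp.sum_le_sum fun i _ => min_le_left (α i) 1).trans hα
  · rw [degreeOf_monomial_eq _ _ one_ne_zero]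
    exact min_le_right _ _
  · ext x
    change eval x.1 (monomial β 1) = eval x.1 (monomial α 1)
    rw [eval_monomial, eval_monomial, one_mul, one_mul,
      Finsupp.prod_mapRange_index (h := fun i e => x.1 i ^ e) fun i => pow_zero _]
    refine Finsupp.prod_congr fun i hi => ?_
    have hk : α i ≠ 0 := Finsupp.mem_support_iff.1 hi
    rw [min_eq_right (Nat.one_le_iff_ne_zero.2 hk), pow_one]
    obtain ⟨k, hk⟩ := Nat.exists_eq_succ_of_ne_zero hk
    rw [hk]
    exact (IsIdempotentElem.pow_succ_eq k ((by decide : ∀ a : ZMod 2, a * a = a) _)).symm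

theorem ncard_setOf_constOn_mul_le [Finite σ] (S : Finset (σ → ZMod 2)) (d : ℕ) :
    {p | p ∈ multilinearDegLE σ (ZMod 2) d ∧ ∀ x ∈ S, ∀ y ∈ S, eval x p = eval y p}.ncard *
        2 ^ evalRank S d ≤ 2 * Nat.card (multilinearDegLE σ (ZMod 2) d) := by
  set V := multilinearDegLE σ (ZMod 2) d
  set C := Submodule.span (ZMod 2) {(fun _ => 1 : S → ZMod 2)}
  have : FiniteDimensional (ZMod 2) ↥(V ⊓ C.comap (evalOn S)) :=
    Submodule.finiteDimensional_of_le inf_le_left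
  have hsub : {p | p ∈ V ∧ ∀ x ∈ S, ∀ y ∈ S, eval x p = eval y p} ⊆ ↑(V ⊓ C.comap (evalOn S)) := by
    rintro p ⟨hpV, hconst⟩
    refine ⟨hpV, Submodule.mem_span_singleton.2 ?_⟩
    rcases S.eq_empty_or_nonempty with rfl | ⟨x₀, hx₀⟩
    · exact ⟨0, funext fun x => absurd x.2 (notMem_empty _)⟩
    · exact ⟨eval x₀ p, funext fun x => by simp [hconst x.1 x.2 x₀ hx₀]⟩
  have hC : finrank (ZMod 2) C ≤ 1 := (finrank_span_le_card _).trans (by simp)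
  have hrank : evalRank S d ≤ finrank (ZMod 2) (V.map (evalOn S)) :=
    Submodule.finrank_mono (map_evalOn_restrictTotalDegree_le S d)
  have hdim := Submodule.finrank_inf_comap_add_finrank_map_le (evalOn S) V C
  have : Finite ↥(V ⊓ C.comap (evalOn S)) := Module.finite_of_finite (ZMod 2)
  calc _ ≤ Nat.card ↥(V ⊓ C.comap (evalOn S)) * 2 ^ finrank (ZMod 2) (V.map (evalOn S)) := by
        gcongr
        · rw [← Nat.card_coe_set_eq]
          exact Set.ncard_le_ncard hsub (Set.toFinite _)
        · norm_num
    _ ≤ 2 * Nat.card V := by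
        rw [Module.natCard_eq_pow_finrank (K := ZMod 2) (V := ↥(V ⊓ C.comap (evalOn S))),
          Module.natCard_eq_pow_finrank (K := ZMod 2) (V := V), Nat.card_zmod, ← pow_succ',
          ← pow_add]
        exact Nat.pow_le_pow_right two_pos (by omega)

theorem ncard_setOf_constOn_le [Finite σ] {S : Finset (σ → ZMod 2)} {k : ℕ} (hS : 2 ^ k ≤ #S)
    (d : ℕ) :
    ({p | p ∈ multilinearDegLE σ (ZMod 2) d ∧ ∀ x ∈ S, ∀ y ∈ S, eval x p = eval y p}.ncard : ℝ) ≤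
      (2 : ℝ) ^ ((1 : ℤ) - (∑ i ∈ range (d + 1), k.choose i : ℕ)) *
        Nat.card (multilinearDegLE σ (ZMod 2) d) := by
  have hB : ∑ i ∈ range (d + 1), k.choose i ≤ evalRank S d := by
    rw [← weightCount_two_pow]
    exact (weightCount_mono _ hS).trans (weightCount_card_le_evalRank S d)
  have h := (Nat.mul_le_mul_left _ (Nat.pow_le_pow_right two_pos hB)).trans
    (ncard_setOf_constOn_mul_le S d)
  rw [zpow_sub₀ two_ne_zero, zpow_one, zpow_natCast, div_mul_eq_mul_div,
    le_div_iff₀ (by positivity)]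
  exact_mod_cast h

lemma two_pow_le_card_filter_ne_zero {α : Type*} [Fintype α] {f : α → ℝ} {k : ℕ}
    (hsum : ∑ x, f x = 1) (hle : ∀ x, f x ≤ ((2 : ℝ) ^ k)⁻¹) : 2 ^ k ≤ #{x | f x ≠ 0} := by
  have h : (1 : ℝ) ≤ #{x | f x ≠ 0} * ((2 : ℝ) ^ k)⁻¹ := by
    rw [← hsum, ← sum_filter_ne_zero, ← nsmul_eq_mul]
    exact sum_le_card_nsmul _ _ _ fun x _ => hle x
  rw [← div_eq_mul_inv, one_le_div (by positivity)] at h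
  exact_mod_cast h

lemma one_sub_mul_ncard_le {α ι : Type*} [Fintype ι] {V G : Set α} {B : ι → Set α} {z : ℝ}
    (hV : V.Finite) (hG : G ⊆ V) (hB : ∀ j, B j ⊆ V) (hcover : V ⊆ G ∪ ⋃ j, B j)
    (hBz : ∀ j, ((B j).ncard : ℝ) ≤ z * V.ncard) :
    (1 - Fintype.card ι * z) * V.ncard ≤ G.ncard := by
  have hcount : V.ncard ≤ G.ncard + ∑ j, (B j).ncard :=
    (Set.ncard_le_ncard hcover (hV.subset (Set.union_subset hG (Set.iUnion_subset hB)))).trans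
      ((Set.ncard_union_le _ _).trans (Nat.add_le_add_left (Set.ncard_iUnion_le_of_fintype _) _))
  have hsum : ∑ j, ((B j).ncard : ℝ) ≤ Fintype.card ι * (z * V.ncard) := by
    simpa using sum_le_sum fun j (_ : j ∈ univ) => hBz j
  have hcount' : (V.ncard : ℝ) ≤ G.ncard + ∑ j, ((B j).ncard : ℝ) := by exact_mod_cast hcount
  linarith

theorem stmt17_general (n d k N : ℕ)
    (X : Fin N → (Fin n → ZMod 2) → ℝ)
    (hsum : ∀ j, ∑ x, X j x = 1)
    (hent : ∀ j x, X j x ≤ ((2 : ℝ) ^ k)⁻¹) :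
    ((1 : ℝ) - N * (2 : ℝ) ^ ((1 : ℤ) - (∑ i ∈ Finset.range (d + 1), k.choose i : ℕ)))
        * (Set.ncard {p : MvPolynomial (Fin n) (ZMod 2) |
            p.totalDegree ≤ d ∧ ∀ i, p.degreeOf i ≤ 1} : ℝ)
      ≤ (Set.ncard {p : MvPolynomial (Fin n) (ZMod 2) |
          (p.totalDegree ≤ d ∧ ∀ i, p.degreeOf i ≤ 1) ∧
          ∀ j : Fin N, ∃ x y : Fin n → ZMod 2, X j x ≠ 0 ∧ X j y ≠ 0 ∧
            MvPolynomial.eval x p ≠ MvPolynomial.eval y p} : ℝ) := by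
  set V := multilinearDegLE (Fin n) (ZMod 2) d
  have hV : {p : MvPolynomial (Fin n) (ZMod 2) | p.totalDegree ≤ d ∧ ∀ i, p.degreeOf i ≤ 1} = V :=
    Set.ext fun _ => mem_multilinearDegLE.symm
  have : Finite V := Module.finite_of_finite (ZMod 2)
  rw [hV]
  conv_lhs => rw [← Fintype.card_fin N]
  refine one_sub_mul_ncard_le (Set.toFinite _) (fun p hp => mem_multilinearDegLE.2 hp.1)
    (B := fun j => {p | p ∈ V ∧ ∀ x ∈ ({x | X j x ≠ 0} : Finset _),
      ∀ y ∈ ({x | X j x ≠ 0} : Finset _), eval x p = eval y p})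
    (fun j p hp => hp.1) (fun p hp => ?_) fun j => ?_
  · by_cases hgood : ∀ j, ∃ x y, X j x ≠ 0 ∧ X j y ≠ 0 ∧ eval x p ≠ eval y p
    · exact Or.inl ⟨mem_multilinearDegLE.1 hp, hgood⟩
    · push Not at hgood
      obtain ⟨j, hj⟩ := hgood
      exact Or.inr (Set.mem_iUnion.2
        ⟨j, hp, fun x hx y hy => hj x y (mem_filter.1 hx).2 (mem_filter.1 hy).2⟩)
  · rw [← Nat.card_coe_set_eq]
    exact ncard_setOf_constOn_le (two_pow_le_card_filter_ne_zero (hsum j) (hent j)) d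

/-- A uniformly random multilinear polynomial of degree `≤ d` over `F_2` is a disperser
(non-constant on the support of every distribution) for any family `X_1, …, X_N` of
distributions over `{0,1}^n` of min-entropy `≥ k`, with probability at least
`1 − N · 2^{1 − ∑_{i=0}^d C(k,i)}`.  Stated by counting polynomials. -/
theorem stmt17 (n d k N : ℕ) (hn : 1 ≤ n) (hd : 1 ≤ d) (hk : 1 ≤ k)
    (X : Fin N → (Fin n → ZMod 2) → ℝ)
    (hpos : ∀ j x, 0 ≤ X j x)
    (hsum : ∀ j, ∑ x, X j x = 1)
    (hent : ∀ j x, X j x ≤ ((2 : ℝ) ^ k)⁻¹) :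
    ((1 : ℝ) - N * (2 : ℝ) ^ ((1 : ℤ) - (∑ i ∈ Finset.range (d + 1), k.choose i : ℕ)))
        * (Set.ncard {p : MvPolynomial (Fin n) (ZMod 2) |
            p.totalDegree ≤ d ∧ ∀ i, p.degreeOf i ≤ 1} : ℝ)
      ≤ (Set.ncard {p : MvPolynomial (Fin n) (ZMod 2) |
          (p.totalDegree ≤ d ∧ ∀ i, p.degreeOf i ≤ 1) ∧
          ∀ j : Fin N, ∃ x y : Fin n → ZMod 2, X j x ≠ 0 ∧ X j y ≠ 0 ∧
            MvPolynomial.eval x p ≠ MvPolynomial.eval y p} : ℝ) :=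
  stmt17_general n d k N X hsum hent
end

section
/- Let 1 ≤ d ≤ ℓ ≤ n and S ⊆ {0,1}^n, identified with F_2^n. If T is a uniformly random subset of S of size b = ∑_{i=0}^d C(ℓ,i), then the probability that h_T(d, F_2) = |T| (i.e., T has full Hilbert dimension) is at least 1 − b · 2^ℓ / |S|. -/
open Finset

section Pivots

variable (K : Type*) {ι V : Type*} [LinearOrder ι] [DivisionRing K] [AddCommGroup V] [Module K V]

def pivots (f : ι → V) : Set ι := {i | f i ∉ Submodule.span K (f '' Set.Iio i)}

variable {K}

theorem mem_pivots {f : ι → V} {i : ι} :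
    i ∈ pivots K f ↔ f i ∉ Submodule.span K (f '' Set.Iio i) :=
  Iff.rfl

theorem span_image_pivots [WellFoundedLT ι] (f : ι → V) :
    Submodule.span K (f '' pivots K f) = Submodule.span K (Set.range f) := by
  refine le_antisymm (Submodule.span_mono (Set.image_subset_range _ _)) ?_
  rw [Submodule.span_le]
  rintro _ ⟨i, rfl⟩
  induction i using WellFoundedLT.induction with | _ i ih
  by_cases hi : i ∈ pivots K f
  · exact Submodule.subset_span (Set.mem_image_of_mem f hi)
  · refine Submodule.span_le.2 ?_ (not_not.1 hi)
    rintro _ ⟨j, hj, rfl⟩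
    exact ih j hj

theorem linearIndepOn_pivots (f : ι → V) : LinearIndepOn K f (pivots K f) := by
  classical
  refine linearIndepOn_of_finite _ fun t ht htfin => ?_
  lift t to Finset ι using htfin
  induction t using Finset.induction_on_max with
  | empty => simp
  | insert a s hlt ih =>
    have has : a ∉ s := fun h => lt_irrefl a (hlt a h)
    rw [coe_insert, Set.insert_subset_iff] at ht
    rw [coe_insert, linearIndepOn_insert (by exact_mod_cast has)]
    refine ⟨ih ht.2, fun hspan => ht.1 (Submodule.span_mono ?_ hspan)⟩
    exact Set.image_mono fun x hx => hlt x hx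

end Pivots

theorem Finset.Colex.toColex_union_lt_toColex_union {α : Type*} [LinearOrder α]
    {s t u : Finset α} (hst : toColex s < toColex t) (hut : Disjoint u t) :
    toColex (s ∪ u) < toColex (t ∪ u) := by
  rw [← toColex_sdiff_lt_toColex_sdiff subset_union_right subset_union_right, union_sdiff_right,
    union_sdiff_right, hut.symm.sdiff_eq_left]
  exact (toColex_le_toColex_of_subset sdiff_subset).trans_lt hst

theorem Finset.prod_mul_prod_eq_prod_union {ι M : Type*} [DecidableEq ι] [CommMonoid M]
    {f : ι → M} (hf : ∀ i, IsIdempotentElem (f i)) (s t : Finset ι) :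
    (∏ i ∈ s, f i) * ∏ i ∈ t, f i = ∏ i ∈ s ∪ t, f i := by
  rw [← prod_union_inter, ← prod_sdiff (inter_subset_union (s := s) (t := t)), mul_assoc]
  congr 1
  exact prod_induction _ IsIdempotentElem (fun _ _ ha hb => ha.mul hb) .one fun i _ => hf i

section LowerSets

variable {n : ℕ} {Δ : Finset (Finset (Fin n))}

theorem choose_le_card_slice_of_choose_lt_card_slice (hΔ : IsLowerSet (Δ : Set (Finset (Fin n))))
    {j k l : ℕ} (hln : l ≤ n) (hjk : j ≤ k) (hk : l.choose k < #(Δ # k)) :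
    l.choose j ≤ #(Δ # j) := by
  by_cases hkl : k ≤ l
  · have hkk := kruskal_katona_lovasz_form (i := k - j) (Nat.sub_le k j) hkl hln sized_slice hk.le
    rw [Nat.sub_sub_self hjk] at hkk
    refine hkk.trans (card_le_card fun t ht => ?_)
    obtain ⟨s, hs, hts, -⟩ := mem_shadow_iterate_iff_exists_sdiff.1 ht
    have htj : #t = j := by simpa [Nat.sub_sub_self hjk] using sized_slice.shadow_iterate ht
    exact mem_slice.2 ⟨hΔ hts (slice_subset hs), htj⟩
  · obtain ⟨s, hs⟩ := card_pos.1 ((Nat.zero_le _).trans_lt hk)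
    rw [mem_slice] at hs
    calc l.choose j ≤ k.choose j := Nat.choose_le_choose j (by omega)
      _ = #(powersetCard j s) := by rw [card_powersetCard, hs.2]
      _ ≤ #(Δ # j) := card_le_card fun t ht => by
          rw [mem_powersetCard] at ht
          exact mem_slice.2 ⟨hΔ ht.1 hs.1, ht.2⟩

theorem card_filter_card_le_eq_sum_card_slice (Δ : Finset (Finset (Fin n))) (d : ℕ) :
    #{s ∈ Δ | #s ≤ d} = ∑ r ∈ range (d + 1), #(Δ # r) := by
  rw [card_eq_sum_card_fiberwise (f := card) fun s hs =>
    mem_range.2 (Nat.lt_succ_of_le (mem_filter.1 hs).2)]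
  refine sum_congr rfl fun r hr => congrArg card ?_
  ext s
  simp only [mem_filter, mem_slice, mem_range] at hr ⊢
  constructor
  · exact fun h => ⟨h.1.1, h.2⟩
  · rintro ⟨hs, rfl⟩
    exact ⟨⟨hs, by omega⟩, rfl⟩

theorem sum_choose_le_card_filter_card_le (hΔ : IsLowerSet (Δ : Set (Finset (Fin n))))
    {d l : ℕ} (hdl : d ≤ l) (hΔl : 2 ^ l ≤ #Δ) :
    ∑ i ∈ range (d + 1), l.choose i ≤ #{s ∈ Δ | #s ≤ d} := by
  have hln : l ≤ n := by
    have := hΔl.trans (card_le_univ Δ)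
    rwa [Fintype.card_finset, Fintype.card_fin, Nat.pow_le_pow_iff_right (by norm_num)] at this
  rw [card_filter_card_le_eq_sum_card_slice]
  by_contra! hlow
  have hhigh : ∀ k ∈ Ico (d + 1) (n + 1), #(Δ # k) ≤ l.choose k := by
    intro k hk
    by_contra! hlt
    refine hlow.not_ge (sum_le_sum fun j hj => ?_)
    rw [mem_range] at hj
    rw [mem_Ico] at hk
    exact choose_le_card_slice_of_choose_lt_card_slice hΔ hln (by omega) hlt
  have hsum : ∑ r ∈ range (n + 1), l.choose r = 2 ^ l := by
    rw [← Nat.sum_range_choose l]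
    refine (sum_subset (range_subset_range.2 (by omega)) fun r _ hr => ?_).symm
    exact Nat.choose_eq_zero_of_lt (by simpa using hr)
  refine hΔl.not_gt ?_
  calc #Δ
    _ = ∑ r ∈ range (n + 1), #(Δ # r) := by
          simpa [Nat.range_succ_eq_Iic] using (sum_card_slice Δ).symm
    _ = ∑ r ∈ range (d + 1), #(Δ # r) + ∑ r ∈ Ico (d + 1) (n + 1), #(Δ # r) :=
          (sum_range_add_sum_Ico _ (by omega)).symm
    _ < ∑ r ∈ range (d + 1), l.choose r + ∑ r ∈ Ico (d + 1) (n + 1), l.choose r :=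
          add_lt_add_of_lt_of_le hlow (sum_le_sum hhigh)
    _ = 2 ^ l := by rw [sum_range_add_sum_Ico _ (by omega), hsum]

end LowerSets

section Closure

variable (F : Type) [Field F]

noncomputable def polyFns (n d : ℕ) : Submodule F ((Fin n → F) → F) :=
  (MvPolynomial.restrictTotalDegree (Fin n) F d).map (MvPolynomial.evalₗ F (Fin n))

variable {n : ℕ}

noncomputable def restrictTo (A : Set (Fin n → F)) : ((Fin n → F) → F) →ₗ[F] (A → F) :=
  LinearMap.funLeft F F Subtype.val

def degClosure (d : ℕ) (T : Set (Fin n → F)) : Set (Fin n → F) :=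
  {x | ∀ g ∈ polyFns F n d, (∀ t ∈ T, g t = 0) → g x = 0}

variable {F}

theorem hilbertFn_eq_finrank_map (d : ℕ) (A : Set (Fin n → F)) :
    hilbertFn F d A = Module.finrank F ((polyFns F n d).map (restrictTo F A)) := by
  have hset : {f : A → F | ∃ p : MvPolynomial (Fin n) F, p.totalDegree ≤ d ∧
      ∀ s : A, MvPolynomial.eval (s : Fin n → F) p = f s} =
      (restrictTo F A ∘ₗ MvPolynomial.evalₗ F (Fin n)) ''
        (MvPolynomial.restrictTotalDegree (Fin n) F d) := by
    ext f
    simp only [Set.mem_ofPred_eq, Set.mem_image, SetLike.mem_coe,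
      MvPolynomial.mem_restrictTotalDegree, funext_iff]
    rfl
  rw [hilbertFn, hset, Submodule.span_image, Submodule.span_eq, polyFns, Submodule.map_comp]

theorem restrictTo_mul (A : Set (Fin n → F)) (g h : (Fin n → F) → F) :
    restrictTo F A (g * h) = restrictTo F A g * restrictTo F A h :=
  rfl

theorem subset_degClosure (d : ℕ) (T : Set (Fin n → F)) : T ⊆ degClosure F d T :=
  fun x hx _ _ hg => hg x hx

theorem hilbertFn_degClosure_le_card (d : ℕ) (T : Finset (Fin n → F)) :
    hilbertFn F d (degClosure F d (T : Set (Fin n → F))) ≤ #T := by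
  set C := degClosure F d (T : Set (Fin n → F))
  let ρ : (C → F) →ₗ[F] (T → F) :=
    LinearMap.funLeft F F fun t : (T : Set (Fin n → F)) => ⟨t, subset_degClosure d _ t.2⟩
  have hinj : Function.Injective (ρ.domRestrict ((polyFns F n d).map (restrictTo F C))) := by
    rw [← LinearMap.ker_eq_bot, LinearMap.ker_eq_bot']
    rintro ⟨_, g, hg, rfl⟩ (hρ : ρ (restrictTo F C g) = 0)
    ext x
    exact x.2 g hg fun t ht => congrFun hρ ⟨t, ht⟩
  rw [hilbertFn_eq_finrank_map]
  simpa using LinearMap.finrank_le_finrank_of_injective hinj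

theorem hilbertFn_eq_card_of_forall_notMem_degClosure [DecidableEq F] (d : ℕ)
    (T : Finset (Fin n → F))
    (hT : ∀ t ∈ T, t ∉ degClosure F d (T.erase t : Set (Fin n → F))) :
    hilbertFn F d (T : Set (Fin n → F)) = #T := by
  suffices htop : (polyFns F n d).map (restrictTo F T) = ⊤ by
    rw [hilbertFn_eq_finrank_map, htop, finrank_top]
    simp
  refine eq_top_iff.2 fun f _ => ?_
  rw [pi_eq_sum_univ f]
  refine Submodule.sum_mem _ fun t _ => Submodule.smul_mem _ _ ?_
  obtain ⟨g, hg, hgT, hgt⟩ :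
      ∃ g ∈ polyFns F n d, (∀ s ∈ T.erase t, g s = 0) ∧ g t ≠ 0 := by
    simpa [degClosure, and_comm] using hT t t.2
  refine ⟨(g t)⁻¹ • g, Submodule.smul_mem _ _ hg, funext fun s => ?_⟩
  by_cases hst : t = s
  · subst hst
    simp [restrictTo, hgt]
  · have : g s = 0 := hgT s (mem_erase.2 ⟨fun h => hst (Subtype.ext h.symm), s.2⟩)
    simp [restrictTo, hst, this]

end Closure

section Cube

variable {n : ℕ}

def monomialFn (s : Finset (Fin n)) (x : Fin n → ZMod 2) : ZMod 2 := ∏ i ∈ s, x i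

theorem monomialFn_mul (s t : Finset (Fin n)) :
    monomialFn s * monomialFn t = monomialFn (s ∪ t) :=
  funext fun x =>
    prod_mul_prod_eq_prod_union (fun i => (by decide : ∀ a : ZMod 2, a * a = a) (x i)) s t

theorem monomialFn_mem_polyFns {d : ℕ} {s : Finset (Fin n)} (hs : #s ≤ d) :
    monomialFn s ∈ polyFns (ZMod 2) n d := by
  refine ⟨∏ i ∈ s, MvPolynomial.X i, ?_, funext fun x => by simp [monomialFn]⟩
  rw [SetLike.mem_coe, MvPolynomial.mem_restrictTotalDegree]
  refine (MvPolynomial.totalDegree_finsetProd _ _).trans ?_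
  simpa using hs

theorem span_range_monomialFn :
    Submodule.span (ZMod 2) (Set.range (monomialFn (n := n))) = ⊤ := by
  classical
  refine eq_top_iff.2 fun f _ => ?_
  rw [pi_eq_sum_univ f]
  refine Submodule.sum_mem _ fun a _ => Submodule.smul_mem _ _ ?_
  -- Over `F₂` the indicator of `a` is `x ↦ ∏ i, (x i + a i + 1)`; expand the product.
  have hδ : (fun x => if a = x then 1 else 0) =
      ∑ t : Finset (Fin n), (∏ i ∈ tᶜ, (a i + 1)) • monomialFn t := by
    funext x
    have hfac : ∀ u v : ZMod 2, u + (v + 1) = if v = u then 1 else 0 := by decide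
    simp only [Finset.sum_apply, Pi.smul_apply, smul_eq_mul, monomialFn,
      mul_comm _ (∏ i ∈ _, x i), ← Fintype.prod_add, hfac, prod_boole, mem_univ, true_implies,
      funext_iff]
  rw [hδ]
  exact Submodule.sum_mem _ fun t _ => Submodule.smul_mem _ _ (Submodule.subset_span ⟨t, rfl⟩)

end Cube

section StandardMonomials

variable {n : ℕ}

noncomputable def monomialOn (A : Set (Fin n → ZMod 2)) (s : Colex (Finset (Fin n))) :
    A → ZMod 2 :=
  restrictTo (ZMod 2) A (monomialFn (ofColex s))

open Classical in
noncomputable def standardMonomials (A : Set (Fin n → ZMod 2)) : Finset (Finset (Fin n)) :=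
  {s | toColex s ∈ pivots (ZMod 2) (monomialOn A)}

theorem mem_standardMonomials {A : Set (Fin n → ZMod 2)} {s : Finset (Fin n)} :
    s ∈ standardMonomials A ↔ toColex s ∈ pivots (ZMod 2) (monomialOn A) := by
  simp [standardMonomials]

theorem isLowerSet_standardMonomials (A : Set (Fin n → ZMod 2)) :
    IsLowerSet (standardMonomials A : Set (Finset (Fin n))) := by
  intro s t hts hs
  -- Multiplying a relation of `t` with smaller monomials by the monomial of `s \ t` gives one of
  -- `s`: adding `s \ t`, which is disjoint from `t`, preserves the colex order below `t`.
  by_contra ht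
  rw [mem_coe, mem_standardMonomials, mem_pivots, not_not] at ht
  apply mem_standardMonomials.1 hs
  let φ := LinearMap.mulRight (ZMod 2) (restrictTo (ZMod 2) A (monomialFn (s \ t)))
  have hφ : ∀ u, φ (monomialOn A u) = monomialOn A (toColex (ofColex u ∪ (s \ t))) := by
    intro u
    rw [LinearMap.mulRight_apply, monomialOn, monomialOn, ← restrictTo_mul, monomialFn_mul,
      ofColex_toColex]
  have hmem := Submodule.mem_map_of_mem (f := φ) ht
  rw [Submodule.map_span, ← Set.image_comp, hφ, ofColex_toColex,
    union_sdiff_of_subset hts] at hmem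
  refine Submodule.span_mono ?_ hmem
  rintro _ ⟨u, hu, rfl⟩
  refine ⟨_, ?_, (hφ u).symm⟩
  have hlt := Colex.toColex_union_lt_toColex_union (s := ofColex u) (u := s \ t) hu sdiff_disjoint
  rwa [union_sdiff_of_subset hts] at hlt

theorem span_image_pivots_monomialOn (A : Set (Fin n → ZMod 2)) :
    Submodule.span (ZMod 2) (monomialOn A '' pivots (ZMod 2) (monomialOn A)) = ⊤ := by
  have : Finite (Colex (Finset (Fin n))) := inferInstanceAs (Finite (Finset (Fin n)))
  have hrange : Set.range (monomialOn A) = restrictTo (ZMod 2) A '' Set.range monomialFn := by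
    rw [← Set.range_comp, ← ofColex.surjective.range_comp]
    rfl
  rw [span_image_pivots, hrange, Submodule.span_image, span_range_monomialFn, Submodule.map_top,
    LinearMap.range_eq_top]
  exact LinearMap.funLeft_surjective_of_injective _ _ _ Subtype.val_injective

theorem card_le_card_standardMonomials (A : Finset (Fin n → ZMod 2)) :
    #A ≤ #(standardMonomials (A : Set (Fin n → ZMod 2))) := by
  classical
  set A' := (A : Set (Fin n → ZMod 2))
  have hset : monomialOn A' '' pivots (ZMod 2) (monomialOn A') =
      ↑((standardMonomials A').image (monomialOn A' ∘ toColex)) := by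
    ext v
    simp [mem_standardMonomials]
  calc #A = Module.finrank (ZMod 2) (A' → ZMod 2) := by simp [A']
    _ = Module.finrank (ZMod 2)
          (Submodule.span (ZMod 2) (monomialOn A' '' pivots (ZMod 2) (monomialOn A'))) := by
        rw [span_image_pivots_monomialOn, finrank_top]
    _ ≤ #((standardMonomials A').image (monomialOn A' ∘ toColex)) := by
        rw [hset]
        exact finrank_span_finset_le_card _
    _ ≤ #(standardMonomials A') := card_image_le

theorem card_filter_standardMonomials_le_hilbertFn (A : Set (Fin n → ZMod 2)) (d : ℕ) :
    #{s ∈ standardMonomials A | #s ≤ d} ≤ hilbertFn (ZMod 2) d A := by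
  set W := (polyFns (ZMod 2) n d).map (restrictTo (ZMod 2) A)
  set Δ : Finset (Finset (Fin n)) := {s ∈ standardMonomials A | #s ≤ d}
  have hli : LinearIndepOn (ZMod 2) (monomialOn A ∘ toColex) (Δ : Set (Finset (Fin n))) := by
    refine (linearIndepOn_equiv toColex).2 ((linearIndepOn_pivots (monomialOn A)).mono ?_)
    rintro _ ⟨s, hs, rfl⟩
    exact mem_standardMonomials.1 (mem_filter.1 hs).1
  have hW : ∀ s : Δ, monomialOn A (toColex s) ∈ W := fun s =>
    Submodule.mem_map_of_mem (monomialFn_mem_polyFns (mem_filter.1 s.2).2)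
  have hli' : LinearIndependent (ZMod 2) fun s : Δ => (⟨_, hW s⟩ : W) :=
    LinearIndependent.of_comp W.subtype hli
  rw [hilbertFn_eq_finrank_map, ← Fintype.card_coe]
  exact hli'.fintype_card_le_finrank

end StandardMonomials

section Counting

variable {n : ℕ}

theorem sum_range_choose_pos (d l : ℕ) : 0 < ∑ i ∈ range (d + 1), l.choose i :=
  sum_pos' (fun _ _ => Nat.zero_le _) ⟨0, mem_range.2 d.succ_pos, by simp⟩

theorem sum_choose_le_hilbertFn (A : Finset (Fin n → ZMod 2)) {d l : ℕ} (hdl : d ≤ l)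
    (hA : 2 ^ l ≤ #A) :
    ∑ i ∈ range (d + 1), l.choose i ≤ hilbertFn (ZMod 2) d (A : Set (Fin n → ZMod 2)) :=
  (sum_choose_le_card_filter_card_le (isLowerSet_standardMonomials _) hdl
    (hA.trans (card_le_card_standardMonomials A))).trans
    (card_filter_standardMonomials_le_hilbertFn _ d)

open Classical in
theorem card_degClosure_lt (T : Finset (Fin n → ZMod 2)) {d l : ℕ} (hdl : d ≤ l)
    (hT : #T < ∑ i ∈ range (d + 1), l.choose i) :
    #(degClosure (ZMod 2) d (T : Set (Fin n → ZMod 2))).toFinset < 2 ^ l := by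
  by_contra! hcl
  have hB := sum_choose_le_hilbertFn _ hdl hcl
  rw [Set.coe_toFinset] at hB
  have := hilbertFn_degClosure_le_card d T
  omega

noncomputable def nonFullSubsets (d b : ℕ) (S : Finset (Fin n → ZMod 2)) :
    Finset (Finset (Fin n → ZMod 2)) :=
  (S.powersetCard b).filter fun T => hilbertFn (ZMod 2) d (↑T : Set (Fin n → ZMod 2)) ≠ #T

theorem card_nonFullSubsets_le (S : Finset (Fin n → ZMod 2)) {b d l : ℕ} (hdl : d ≤ l)
    (hb : b ≤ ∑ i ∈ range (d + 1), l.choose i) :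
    #(nonFullSubsets d b S) ≤ #(S.powersetCard (b - 1)) * (2 ^ l - b) := by
  classical
  have hB := sum_range_choose_pos d l
  set pairs := (S.powersetCard (b - 1)).sigma fun T' =>
    (degClosure (ZMod 2) d (T' : Set (Fin n → ZMod 2))).toFinset \ T'
  have hsub : nonFullSubsets d b S ⊆ pairs.image fun p => insert p.2 p.1 := by
    intro T hT
    obtain ⟨hTS, hne⟩ := mem_filter.1 hT
    obtain ⟨t, ht, htcl⟩ :
        ∃ t ∈ T, t ∈ degClosure (ZMod 2) d (T.erase t : Set (Fin n → ZMod 2)) := by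
      by_contra! h
      exact hne (hilbertFn_eq_card_of_forall_notMem_degClosure d T h)
    rw [mem_powersetCard] at hTS
    refine mem_image.2 ⟨⟨T.erase t, t⟩, mem_sigma.2 ⟨?_, ?_⟩, insert_erase ht⟩
    · exact mem_powersetCard.2
        ⟨(erase_subset t T).trans hTS.1, by rw [card_erase_of_mem ht, hTS.2]⟩
    · exact mem_sdiff.2 ⟨Set.mem_toFinset.2 htcl, notMem_erase t T⟩
  calc #(nonFullSubsets d b S) ≤ #(pairs.image fun p => insert p.2 p.1) := card_le_card hsub
    _ ≤ #pairs := card_image_le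
    _ = ∑ T' ∈ S.powersetCard (b - 1),
          #((degClosure (ZMod 2) d (T' : Set (Fin n → ZMod 2))).toFinset \ T') := card_sigma _ _
    _ ≤ ∑ T' ∈ S.powersetCard (b - 1), (2 ^ l - b) := sum_le_sum fun T' hT' => by
          have hcard := (mem_powersetCard.1 hT').2
          have hcl := card_degClosure_lt T' hdl (by omega)
          rw [card_sdiff_of_subset fun x hx => Set.mem_toFinset.2 (subset_degClosure d _ hx)]
          omega
    _ = #(S.powersetCard (b - 1)) * (2 ^ l - b) := by rw [sum_const, smul_eq_mul]

theorem card_nonFullSubsets_mul_card_le (S : Finset (Fin n → ZMod 2)) {d l : ℕ}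
    (hdl : d ≤ l) :
    #(nonFullSubsets d (∑ i ∈ range (d + 1), l.choose i) S) * #S ≤
      (∑ i ∈ range (d + 1), l.choose i) * 2 ^ l *
        #(S.powersetCard (∑ i ∈ range (d + 1), l.choose i)) := by
  set B := ∑ i ∈ range (d + 1), l.choose i
  have hB : 0 < B := sum_range_choose_pos d l
  have hbad := card_nonFullSubsets_le S hdl le_rfl
  have hbadC : #(nonFullSubsets d B S) ≤ #(S.powersetCard B) := card_filter_le _ _
  set bad := #(nonFullSubsets d B S)
  rw [card_powersetCard] at hbad hbadC ⊢
  set N := #S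
  rcases lt_or_ge N (2 ^ l) with hN | hN
  · calc bad * N ≤ N.choose B * 2 ^ l := Nat.mul_le_mul hbadC hN.le
      _ ≤ B * (N.choose B * 2 ^ l) := Nat.le_mul_of_pos_left _ hB
      _ = B * 2 ^ l * N.choose B := by ring
  · have hid := Nat.choose_succ_right_eq N (B - 1)
    rw [Nat.sub_add_cancel hB] at hid
    have hfac : (2 ^ l - B) * N ≤ (N - (B - 1)) * 2 ^ l := by
      rcases le_or_gt B (2 ^ l) with hBl | hBl
      · zify [hBl, hBl.trans hN, hB, (Nat.sub_le B 1).trans (hBl.trans hN)]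
        nlinarith
      · simp [Nat.sub_eq_zero_of_le hBl.le]
    calc bad * N ≤ N.choose (B - 1) * (2 ^ l - B) * N := Nat.mul_le_mul_right N hbad
      _ ≤ N.choose (B - 1) * ((N - (B - 1)) * 2 ^ l) := by
          rw [mul_assoc]
          exact Nat.mul_le_mul_left _ hfac
      _ = B * 2 ^ l * N.choose B := by rw [← mul_assoc, ← hid]; ring

end Counting

open Classical in
theorem stmt19_general (n d l : ℕ) (hdl : d ≤ l)
    (S : Finset (Fin n → ZMod 2)) :
    ((1 : ℝ) - ((∑ i ∈ Finset.range (d + 1), l.choose i : ℕ) : ℝ) * 2 ^ l / (S.card : ℝ))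
        * ((S.powersetCard (∑ i ∈ Finset.range (d + 1), l.choose i)).card : ℝ)
      ≤ (((S.powersetCard (∑ i ∈ Finset.range (d + 1), l.choose i)).filter
          (fun T : Finset (Fin n → ZMod 2) => hilbertFn (ZMod 2) d (↑T : Set (Fin n → ZMod 2)) = T.card)).card : ℝ) := by
  set B := ∑ i ∈ Finset.range (d + 1), l.choose i
  rcases (#S).eq_zero_or_pos with hS | hS
  · have hC : #(S.powersetCard B) = 0 := by
      rw [card_powersetCard, hS, Nat.choose_eq_zero_of_lt (sum_range_choose_pos d l)]
    simp [hC]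
  have hbad : (#(S.powersetCard B) : ℝ) -
      #((S.powersetCard B).filter fun T : Finset (Fin n → ZMod 2) =>
        hilbertFn (ZMod 2) d (↑T : Set (Fin n → ZMod 2)) = #T) = #(nonFullSubsets d B S) := by
    rw [nonFullSubsets, ← card_filter_add_card_filter_not (s := S.powersetCard B)
      fun T : Finset (Fin n → ZMod 2) => hilbertFn (ZMod 2) d (↑T : Set (Fin n → ZMod 2)) = #T]
    push_cast
    ring
  rw [sub_mul, one_mul, div_mul_eq_mul_div, sub_le_comm, hbad, le_div_iff₀ (by exact_mod_cast hS)]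
  exact_mod_cast card_nonFullSubsets_mul_card_le S hdl

open Classical in
/-- For `1 ≤ d ≤ n`, `d ≤ ℓ`, and `S ⊆ {0,1}^n`: a uniformly random subset `T ⊆ S` of
size `b = ∑_{i=0}^d C(ℓ,i)` has full Hilbert dimension (`h_T(d,F_2) = |T|`) with
probability at least `1 − b·2^ℓ/|S|`.  Stated by counting size-`b` subsets. -/
theorem stmt19 (n d l : ℕ) (hd : 1 ≤ d) (hdn : d ≤ n) (hdl : d ≤ l)
    (S : Finset (Fin n → ZMod 2)) :
    ((1 : ℝ) - ((∑ i ∈ Finset.range (d + 1), l.choose i : ℕ) : ℝ) * 2 ^ l / (S.card : ℝ))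
        * ((S.powersetCard (∑ i ∈ Finset.range (d + 1), l.choose i)).card : ℝ)
      ≤ (((S.powersetCard (∑ i ∈ Finset.range (d + 1), l.choose i)).filter
          (fun T : Finset (Fin n → ZMod 2) => hilbertFn (ZMod 2) d (↑T : Set (Fin n → ZMod 2)) = T.card)).card : ℝ) :=
  stmt19_general n d l hdl S
end
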